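/- arXiv:0812.3050 — 11 statements merged into one kernel-verified Lean document; each statement's English description precedes it below -/
import Mathlib

section
/- Let b, c, v, w ∈ ℝ³ be such that v and w are linearly independent and neither b nor c lies in the plane span{v,w} (so in particular (b,v,w) ≠ 0 and (c,v,w) ≠ 0). Then a pair of vectors (v̇, ẇ) ∈ ℝ³ × ℝ³ satisfies the linear system ⟨v,v̇⟩ = 0, ⟨w,ẇ⟩ = 0, ⟨v̇,w⟩ + ⟨v,ẇ⟩ = 0, ⟨b,v̇⟩ = 0, ⟨c,ẇ⟩ = 0 if and only if there exists λ ∈ ℝ with v̇ = λ·[b,v]/(b,v,w) and ẇ = λ·[c,w]/(c,v,w). -/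
/-!
A solution of the system is determined by the two orthogonality conditions on each of `v̇`
and `ẇ`: `v̇ ⟂ b, v` forces `v̇ = μ [b,v]` and `ẇ ⟂ c, w` forces `ẇ = ν [c,w]`. The coupling
equation `⟨v̇,w⟩ + ⟨v,ẇ⟩ = 0` then reads `μ (b,v,w) = ν (c,v,w)`, and both triple products are
nonzero because `b` and `c` lie off the plane `span {v, w}`.
-/

open Matrix

/-- The scalar triple product `(a, b, c) = ⟨a, [b, c]⟩` in `ℝ³`. -/
noncomputable def tripleProd (a b c : Fin 3 → ℝ) : ℝ := a ⬝ᵥ crossProduct b c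

section CrossProduct

variable {K : Type*} [Field K]

theorem dotProduct_cross_ne_zero_iff_notMem_span {a u v : Fin 3 → K}
    (huv : LinearIndependent K ![u, v]) :
    a ⬝ᵥ u ⨯₃ v ≠ 0 ↔ a ∉ Submodule.span K ({u, v} : Set (Fin 3 → K)) := by
  have hrows : LinearIndependent K (of ![a, u, v]).row ↔ a ⬝ᵥ u ⨯₃ v ≠ 0 := by
    rw [linearIndependent_rows_iff_isUnit, isUnit_iff_isUnit_det, isUnit_iff_ne_zero,
      triple_product_eq_det]
    rfl
  rw [← hrows, ← range_cons_cons_empty u v ![]]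
  exact linearIndependent_finCons.trans (and_iff_right huv)

theorem dotProduct_eq_zero_and_iff_exists_smul_cross {a b x : Fin 3 → K} (hab : a ⨯₃ b ≠ 0) :
    (a ⬝ᵥ x = 0 ∧ b ⬝ᵥ x = 0) ↔ ∃ μ : K, x = μ • a ⨯₃ b := by
  constructor
  · rintro ⟨hax, hbx⟩
    have hcross : x ⨯₃ (a ⨯₃ b) = 0 := by
      rw [cross_cross_eq_smul_sub_smul', dotProduct_comm x b, hbx, hax, zero_smul, zero_smul,
        sub_zero]
    have hdep := mt crossProduct_ne_zero_iff_linearIndependent.2 (not_not.2 hcross)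
    simp only [linearIndependent_fin2, cons_val_one, cons_val_zero, ne_eq, hab,
      not_false_eq_true, true_and, not_forall, not_not] at hdep
    obtain ⟨μ, hμ⟩ := hdep
    exact ⟨μ, hμ.symm⟩
  · rintro ⟨μ, rfl⟩
    simp only [dotProduct_smul, dot_self_cross, dot_cross_self, smul_zero, and_self]

end CrossProduct

theorem cross_dotProduct_add_dotProduct_cross (μ ν : ℝ) (b c v w : Fin 3 → ℝ) :
    (μ • b ⨯₃ v) ⬝ᵥ w + v ⬝ᵥ (ν • c ⨯₃ w) = μ * tripleProd b v w - ν * tripleProd c v w := by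
  rw [smul_dotProduct, dotProduct_smul, dotProduct_comm, triple_product_permutation w b v,
    triple_product_permutation v c w, ← cross_anticomm v w, dotProduct_neg, tripleProd, tripleProd,
    smul_eq_mul, smul_eq_mul, mul_neg, sub_eq_add_neg]

/-- **Infinitesimal motions of a (2×2)-mesh.**  If `v, w` are linearly independent and
neither `b` nor `c` lies in the plane `span {v, w}`, then `(v̇, ẇ)` solves the linear
system of infinitesimal flexibility iff `v̇ = λ [b,v]/(b,v,w)` and `ẇ = λ [c,w]/(c,v,w)`
for some real `λ`. -/
theorem stmt0 (b c v w : Fin 3 → ℝ)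
    (hvw : LinearIndependent ℝ ![v, w])
    (hb : b ∉ Submodule.span ℝ ({v, w} : Set (Fin 3 → ℝ)))
    (hc : c ∉ Submodule.span ℝ ({v, w} : Set (Fin 3 → ℝ)))
    (vd wd : Fin 3 → ℝ) :
    (v ⬝ᵥ vd = 0 ∧ w ⬝ᵥ wd = 0 ∧ vd ⬝ᵥ w + v ⬝ᵥ wd = 0 ∧ b ⬝ᵥ vd = 0 ∧ c ⬝ᵥ wd = 0)
    ↔ ∃ l : ℝ,
        vd = (l / tripleProd b v w) • crossProduct b v ∧
        wd = (l / tripleProd c v w) • crossProduct c w := by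
  have hTb : tripleProd b v w ≠ 0 := (dotProduct_cross_ne_zero_iff_notMem_span hvw).2 hb
  have hTc : tripleProd c v w ≠ 0 := (dotProduct_cross_ne_zero_iff_notMem_span hvw).2 hc
  have hbv : b ⨯₃ v ≠ 0 := fun h ↦ hTb <| by
    rw [tripleProd, ← triple_product_permutation w b v, h, dotProduct_zero]
  have hcw : c ⨯₃ w ≠ 0 := fun h ↦ hTc <| by
    rw [tripleProd, triple_product_permutation, ← cross_anticomm, h, neg_zero, dotProduct_zero]
  have hsol_vd := dotProduct_eq_zero_and_iff_exists_smul_cross (x := vd) hbv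
  have hsol_wd := dotProduct_eq_zero_and_iff_exists_smul_cross (x := wd) hcw
  constructor
  · rintro ⟨hv, hw, hcouple, hb', hc'⟩
    obtain ⟨μ, rfl⟩ := hsol_vd.1 ⟨hb', hv⟩
    obtain ⟨ν, rfl⟩ := hsol_wd.1 ⟨hc', hw⟩
    have hμν : μ * tripleProd b v w = ν * tripleProd c v w := by
      rw [← sub_eq_zero, ← cross_dotProduct_add_dotProduct_cross, hcouple]
    refine ⟨μ * tripleProd b v w, ?_, ?_⟩
    · rw [mul_div_cancel_right₀ _ hTb]
    · rw [hμν, mul_div_cancel_right₀ _ hTc]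
  · rintro ⟨l, hvd, hwd⟩
    obtain ⟨hb', hv⟩ := hsol_vd.2 ⟨_, hvd⟩
    obtain ⟨hc', hw⟩ := hsol_wd.2 ⟨_, hwd⟩
    refine ⟨hv, hw, ?_, hb', hc'⟩
    rw [hvd, hwd, cross_dotProduct_add_dotProduct_cross, div_mul_cancel₀ _ hTb,
      div_mul_cancel₀ _ hTc, sub_self]
end

section
/- Under the general position assumptions, the Kokotsakis mesh is infinitesimally flexible (with the central face fixed) if and only if χ(M) = 1, i.e. ∏_{i=1}^n (a_{i−1},v_i,w_i)/(a_i,v_i,w_i) = 1. -/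
/-!
The equations `⟨v_i, v̇_i⟩ = ⟨a_{i-1}, v̇_i⟩ = 0` force `v̇_i = s_i (a_{i-1} × v_i)`, and likewise
`ẇ_i = t_i (a_i × w_i)`. The rigidity of the face `W_i A_i A_{i+1} V_{i+1}` then reads
`(t_i - s_{i+1}) (a_i, w_i, v_{i+1}) = 0`, so `t_i = s_{i+1}`, and that of `V_i A_i W_i` becomes
the recurrence `s_{i+1} (a_i, v_i, w_i) = s_i (a_{i-1}, v_i, w_i)`. A nonzero solution of this
recurrence around the cycle `ℤ/n` exists iff the product of its ratios, `χ(M)`, equals `1`.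
-/

open Matrix

namespace ZMod

variable {n : ℕ} [NeZero n]

lemma eq_zero_of_add_one_eq_mul {M₀ : Type*} [MulZeroClass M₀] {s ρ : ZMod n → M₀}
    (hrec : ∀ i, s (i + 1) = s i * ρ i) {j : ZMod n} (hj : s j = 0) : s = 0 := by
  have hshift : ∀ k : ℕ, s (j + k) = 0 := by
    intro k
    induction k with
    | zero => simpa using hj
    | succ k ih => rw [Nat.cast_succ, ← add_assoc, hrec, ih, zero_mul]
  funext i
  simpa using hshift (i - j).val

lemma prod_range_natCast {M : Type*} [CommMonoid M] (f : ZMod n → M) :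
    ∏ k ∈ Finset.range n, f k = ∏ i, f i := by
  obtain ⟨m, rfl⟩ : ∃ m, n = m + 1 := Nat.exists_eq_succ_of_ne_zero (NeZero.ne n)
  rw [← Fin.prod_univ_eq_prod_range]
  exact Fintype.prod_congr _ _ fun i => congrArg f (natCast_zmod_val (n := m + 1) i)

theorem exists_ne_zero_add_one_eq_mul_iff {G₀ : Type*} [CommGroupWithZero G₀]
    (ρ : ZMod n → G₀) :
    (∃ s : ZMod n → G₀, s ≠ 0 ∧ ∀ i, s (i + 1) = s i * ρ i) ↔ ∏ i, ρ i = 1 := by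
  constructor
  · rintro ⟨s, hs, hrec⟩
    have hprod : ∏ i, s i ≠ 0 :=
      Finset.prod_ne_zero_iff.mpr fun j _ hj => hs (eq_zero_of_add_one_eq_mul hrec hj)
    calc ∏ i, ρ i = (∏ i, s (i + 1)) / ∏ i, s i := by
          simp_rw [hrec, Finset.prod_mul_distrib, mul_div_cancel_left₀ _ hprod]
      _ = 1 := by
          rw [Fintype.prod_equiv (Equiv.addRight 1) (fun i => s (i + 1)) s fun i => rfl,
            div_self hprod]
  · intro hprod
    -- `S` descends to `ZMod n` because `S n = ∏ ρ = 1`.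
    set S : ℕ → G₀ := fun k => ∏ j ∈ Finset.range k, ρ j
    have hS : ∀ k ≤ n, S (k : ZMod n).val = S k := by
      intro k hk
      rcases hk.lt_or_eq with hk | rfl
      · rw [val_cast_of_lt hk]
      · simp [S, prod_range_natCast, hprod]
    refine ⟨fun i => S i.val, Function.ne_iff.mpr ⟨0, by simp [S]⟩, fun i => ?_⟩
    have hi : i + 1 = ((i.val + 1 : ℕ) : ZMod n) := by push_cast [natCast_zmod_val]; rfl
    simp only [hi, hS _ (val_lt i), S, Finset.prod_range_succ, natCast_zmod_val]

end ZMod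

lemma eq_smul_cross_of_dotProduct_eq_zero {F : Type*} [Field F] {x a b : Fin 3 → F}
    (hab : a ⨯₃ b ≠ 0) (ha : a ⬝ᵥ x = 0) (hb : b ⬝ᵥ x = 0) : ∃ s : F, x = s • a ⨯₃ b := by
  have hpar : a ⨯₃ b ⨯₃ x = 0 := by
    rw [← cross_anticomm, cross_cross_eq_smul_sub_smul', dotProduct_comm x, hb, ha,
      zero_smul, zero_smul, sub_zero, neg_zero]
  have hdep := mt crossProduct_ne_zero_iff_linearIndependent.mpr (not_not.mpr hpar)
  obtain ⟨s, hs⟩ : ∃ s : F, s • a ⨯₃ b = x := by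
    simpa [LinearIndependent.pair_iff' hab] using hdep
  exact ⟨s, hs.symm⟩

lemma tripleProd_ne_zero {u v w : Fin 3 → ℝ} (hvw : LinearIndependent ℝ ![v, w])
    (hu : u ∉ Submodule.span ℝ {v, w}) : tripleProd u v w ≠ 0 := by
  have huvw : LinearIndependent ℝ ![u, v, w] := by
    rw [show ![u, v, w] = Fin.cons u ![v, w] from rfl, linearIndependent_finCons,
      Matrix.range_cons_cons_empty]
    exact ⟨hvw, hu⟩
  rw [tripleProd, triple_product_eq_det]
  exact ((Matrix.isUnit_iff_isUnit_det _).mp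
    (Matrix.linearIndependent_rows_iff_isUnit.mp huvw)).ne_zero

lemma cross_dotProduct (x y z : Fin 3 → ℝ) : x ⨯₃ y ⬝ᵥ z = tripleProd x y z := by
  rw [dotProduct_comm, triple_product_permutation, tripleProd]

lemma dotProduct_cross (x y z : Fin 3 → ℝ) : x ⬝ᵥ y ⨯₃ z = -tripleProd y x z := by
  rw [triple_product_permutation, ← cross_anticomm, dotProduct_neg, tripleProd]

lemma cross_ne_zero_of_tripleProd_ne_zero {x y z : Fin 3 → ℝ} (h : tripleProd x y z ≠ 0) :
    x ⨯₃ y ≠ 0 ∧ x ⨯₃ z ≠ 0 :=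
  ⟨fun h0 => h (by rw [← cross_dotProduct, h0, zero_dotProduct]),
    fun h0 => h (by rw [← neg_neg (tripleProd x y z), ← dotProduct_cross, h0, dotProduct_zero,
      neg_zero])⟩

namespace Kokotsakis

variable {n : ℕ} (a v w : ZMod n → Fin 3 → ℝ)

def IsInfinitesimalDeformation (vd wd : ZMod n → Fin 3 → ℝ) : Prop :=
  ∀ i : ZMod n,
    v i ⬝ᵥ vd i = 0 ∧
    w i ⬝ᵥ wd i = 0 ∧
    vd i ⬝ᵥ w i + v i ⬝ᵥ wd i = 0 ∧
    a (i - 1) ⬝ᵥ vd i = 0 ∧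
    a i ⬝ᵥ wd i = 0 ∧
    wd i ⬝ᵥ v (i + 1) + w i ⬝ᵥ vd (i + 1) = 0

variable {a v w}

theorem isInfinitesimalDeformation_iff {vd wd : ZMod n → Fin 3 → ℝ}
    (hp : ∀ i, tripleProd (a (i - 1)) (v i) (w i) ≠ 0)
    (hq : ∀ i, tripleProd (a i) (v i) (w i) ≠ 0)
    (hg : ∀ i, tripleProd (a i) (w i) (v (i + 1)) ≠ 0) :
    IsInfinitesimalDeformation a v w vd wd ↔
      ∃ s : ZMod n → ℝ, vd = (fun i => s i • a (i - 1) ⨯₃ v i) ∧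
        wd = (fun i => s (i + 1) • a i ⨯₃ w i) ∧
        ∀ i, s (i + 1) * tripleProd (a i) (v i) (w i) =
          s i * tripleProd (a (i - 1)) (v i) (w i) := by
  constructor
  · intro h
    choose hv hw h_vw hav haw h_wv using h
    choose s hs using fun i =>
      eq_smul_cross_of_dotProduct_eq_zero (cross_ne_zero_of_tripleProd_ne_zero (hp i)).1
        (hav i) (hv i)
    choose t ht using fun i =>
      eq_smul_cross_of_dotProduct_eq_zero (cross_ne_zero_of_tripleProd_ne_zero (hq i)).2
        (haw i) (hw i)
    have hts : ∀ i, t i = s (i + 1) := by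
      intro i
      have h6 := h_wv i
      rw [ht, hs, add_sub_cancel_right, smul_dotProduct, dotProduct_smul, cross_dotProduct,
        dotProduct_cross, smul_eq_mul, smul_eq_mul] at h6
      have : (t i - s (i + 1)) * tripleProd (a i) (w i) (v (i + 1)) = 0 := by
        linear_combination h6
      exact sub_eq_zero.mp ((mul_eq_zero.mp this).resolve_right (hg i))
    refine ⟨s, funext hs, funext fun i => by rw [ht, hts], fun i => ?_⟩
    have h3 := h_vw i
    rw [ht, hts, hs, smul_dotProduct, dotProduct_smul, cross_dotProduct, dotProduct_cross,
      smul_eq_mul, smul_eq_mul] at h3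
    linear_combination -h3
  · rintro ⟨s, rfl, rfl, hrec⟩ i
    simp only [smul_dotProduct, dotProduct_smul, cross_dotProduct, dotProduct_cross,
      dot_self_cross, dot_cross_self, add_sub_cancel_right, smul_eq_mul, mul_zero]
    refine ⟨trivial, trivial, ?_, trivial, trivial, ?_⟩
    · linear_combination -hrec i
    · ring

theorem exists_ne_zero_isInfinitesimalDeformation_iff
    (hp : ∀ i, tripleProd (a (i - 1)) (v i) (w i) ≠ 0)
    (hq : ∀ i, tripleProd (a i) (v i) (w i) ≠ 0)
    (hg : ∀ i, tripleProd (a i) (w i) (v (i + 1)) ≠ 0) :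
    (∃ vd wd, ¬(vd = 0 ∧ wd = 0) ∧ IsInfinitesimalDeformation a v w vd wd) ↔
      ∃ s : ZMod n → ℝ, s ≠ 0 ∧
        ∀ i, s (i + 1) =
          s i * (tripleProd (a (i - 1)) (v i) (w i) / tripleProd (a i) (v i) (w i)) := by
  simp_rw [isInfinitesimalDeformation_iff hp hq hg, ← mul_div_assoc, eq_div_iff (hq _)]
  constructor
  · rintro ⟨_, _, hne, s, rfl, rfl, hrec⟩
    refine ⟨s, ?_, hrec⟩
    rintro rfl
    exact hne ⟨by ext; simp, by ext; simp⟩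
  · rintro ⟨s, hs, hrec⟩
    obtain ⟨j, hj⟩ := Function.ne_iff.mp hs
    refine ⟨_, _, ?_, s, rfl, rfl, hrec⟩
    rintro ⟨hvd, -⟩
    exact smul_ne_zero hj (cross_ne_zero_of_tripleProd_ne_zero (hp j)).1 (congrFun hvd j)

end Kokotsakis

theorem stmt1_general (n : ℕ) [NeZero n]
    (v w : ZMod n → (Fin 3 → ℝ))
    (a : ZMod n → (Fin 3 → ℝ))
    (hvw : ∀ i, LinearIndependent ℝ ![v i, w i])
    (hprev : ∀ i, a (i - 1) ∉ Submodule.span ℝ ({v i, w i} : Set (Fin 3 → ℝ)))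
    (hnext : ∀ i, a i ∉ Submodule.span ℝ ({v i, w i} : Set (Fin 3 → ℝ)))
    (hgen : ∀ i, tripleProd (a i) (w i) (v (i + 1)) ≠ 0) :
    (∃ vd wd : ZMod n → (Fin 3 → ℝ),
        ¬(vd = 0 ∧ wd = 0) ∧
        ∀ i : ZMod n,
          v i ⬝ᵥ vd i = 0 ∧
          w i ⬝ᵥ wd i = 0 ∧
          vd i ⬝ᵥ w i + v i ⬝ᵥ wd i = 0 ∧
          a (i - 1) ⬝ᵥ vd i = 0 ∧
          a i ⬝ᵥ wd i = 0 ∧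
          wd i ⬝ᵥ v (i + 1) + w i ⬝ᵥ vd (i + 1) = 0)
    ↔ ∏ i : ZMod n, tripleProd (a (i - 1)) (v i) (w i) / tripleProd (a i) (v i) (w i) = 1 :=
  (Kokotsakis.exists_ne_zero_isInfinitesimalDeformation_iff
      (fun i => tripleProd_ne_zero (hvw i) (hprev i))
      (fun i => tripleProd_ne_zero (hvw i) (hnext i)) hgen).trans
    (ZMod.exists_ne_zero_add_one_eq_mul_iff _)

/-- **Kokotsakis' infinitesimal flexibility criterion.**  A Kokotsakis mesh in general
position, with the central `n`-gonal face fixed, is infinitesimally flexible iff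
`χ(M) = ∏ᵢ (a_{i-1}, vᵢ, wᵢ)/(aᵢ, vᵢ, wᵢ) = 1`. -/
theorem stmt1 (n : ℕ) [NeZero n] (hn : 3 ≤ n)
    (A v w : ZMod n → (Fin 3 → ℝ))
    (a : ZMod n → (Fin 3 → ℝ)) (ha : ∀ i, a i = A (i + 1) - A i)
    (hvw : ∀ i, LinearIndependent ℝ ![v i, w i])
    (hprev : ∀ i, a (i - 1) ∉ Submodule.span ℝ ({v i, w i} : Set (Fin 3 → ℝ)))
    (hnext : ∀ i, a i ∉ Submodule.span ℝ ({v i, w i} : Set (Fin 3 → ℝ)))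
    (hgen : ∀ i, tripleProd (a i) (w i) (v (i + 1)) ≠ 0) :
    (∃ vd wd : ZMod n → (Fin 3 → ℝ),
        ¬(vd = 0 ∧ wd = 0) ∧
        ∀ i : ZMod n,
          v i ⬝ᵥ vd i = 0 ∧
          w i ⬝ᵥ wd i = 0 ∧
          vd i ⬝ᵥ w i + v i ⬝ᵥ wd i = 0 ∧
          a (i - 1) ⬝ᵥ vd i = 0 ∧
          a i ⬝ᵥ wd i = 0 ∧
          wd i ⬝ᵥ v (i + 1) + w i ⬝ᵥ vd (i + 1) = 0)
    ↔ ∏ i : ZMod n, tripleProd (a (i - 1)) (v i) (w i) / tripleProd (a i) (v i) (w i) = 1 :=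
  stmt1_general n v w a hvw hprev hnext hgen
end

section
/- In the planar-face configuration, the following identity holds unconditionally: ∏_{i=1}^n (1−t_i)/t_i = (−1)^n · ∏_{i=1}^n (a_i,v_i,w_i)/(a_{i−1},v_i,w_i). -/
open Matrix

/-!
Put `eᵢ = Bᵢ - B_{i-1}`. Then `aᵢ = (1 - t_{i+1}) e_{i+1} + tᵢ eᵢ`, and all `aᵢ`, `eᵢ` lie in the
plane `ν⊥` parallel to `π`. On `ν⊥` the functionals `x ↦ (x, vᵢ, wᵢ)` and `x ↦ (x, eᵢ, ν)` both
vanish on `eᵢ ∈ span {vᵢ, wᵢ}`, so they are proportional, and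
`(aᵢ, vᵢ, wᵢ) / (a_{i-1}, vᵢ, wᵢ) = (aᵢ, eᵢ, ν) / (a_{i-1}, eᵢ, ν)
  = -(1 - t_{i+1}) Dᵢ / (t_{i-1} D_{i-1})` with `Dᵢ = (eᵢ, e_{i+1}, ν)`; the proportionality
also makes `t_{i-1} D_{i-1}` nonzero, as `(a_{i-1}, vᵢ, wᵢ)` is.
In the cyclic product the `Dᵢ` cancel and the shifts of `t` disappear.
-/

lemma tripleProd_eq (a b c : Fin 3 → ℝ) :
    tripleProd a b c = a 0 * (b 1 * c 2 - b 2 * c 1) - a 1 * (b 0 * c 2 - b 2 * c 0)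
      + a 2 * (b 0 * c 1 - b 1 * c 0) := by
  simp [tripleProd, crossProduct, dotProduct, Fin.sum_univ_three]
  ring

lemma tripleProd_add_left (x y b c : Fin 3 → ℝ) :
    tripleProd (x + y) b c = tripleProd x b c + tripleProd y b c :=
  add_dotProduct x y _

lemma tripleProd_smul_left (r : ℝ) (x b c : Fin 3 → ℝ) :
    tripleProd (r • x) b c = r * tripleProd x b c :=
  smul_dotProduct r x _

lemma tripleProd_self_left (x c : Fin 3 → ℝ) : tripleProd x x c = 0 :=
  dot_self_cross x c

lemma tripleProd_swap_left (x y c : Fin 3 → ℝ) : tripleProd x y c = -tripleProd y x c := by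
  simp only [tripleProd_eq]; ring

lemma tripleProd_eq_zero_of_mem_span {x v w : Fin 3 → ℝ}
    (hx : x ∈ Submodule.span ℝ ({v, w} : Set (Fin 3 → ℝ))) : tripleProd x v w = 0 := by
  obtain ⟨c, d, rfl⟩ := Submodule.mem_span_pair.mp hx
  simp [tripleProd, add_dotProduct, dot_self_cross, dot_cross_self]

lemma tripleProd_plucker (p q r s v w : Fin 3 → ℝ) :
    tripleProd q r s * tripleProd p v w - tripleProd p r s * tripleProd q v w
      + tripleProd p q s * tripleProd r v w - tripleProd p q r * tripleProd s v w = 0 := by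
  simp only [tripleProd_eq]; ring

lemma tripleProd_eq_zero_of_orthogonal {x y z ν : Fin 3 → ℝ} (hν : ν ≠ 0)
    (hx : ν ⬝ᵥ x = 0) (hy : ν ⬝ᵥ y = 0) (hz : ν ⬝ᵥ z = 0) : tripleProd x y z = 0 := by
  have hid : tripleProd x y z * (ν ⬝ᵥ ν) = (ν ⬝ᵥ x) * tripleProd ν y z
      + (ν ⬝ᵥ y) * tripleProd x ν z + (ν ⬝ᵥ z) * tripleProd x y ν := by
    simp only [tripleProd_eq, dotProduct, Fin.sum_univ_three]; ring
  rw [hx, hy, hz] at hid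
  simpa [dotProduct_self_eq_zero, hν] using hid

section OrthogonalPlane

variable {u x y ν v w : Fin 3 → ℝ}

lemma tripleProd_mul_tripleProd_comm_of_orthogonal (hν : ν ≠ 0) (hu : ν ⬝ᵥ u = 0)
    (hx : ν ⬝ᵥ x = 0) (hy : ν ⬝ᵥ y = 0) (huvw : tripleProd u v w = 0) :
    tripleProd x v w * tripleProd y u ν = tripleProd y v w * tripleProd x u ν := by
  have h := tripleProd_plucker x y u ν v w
  rw [huvw, tripleProd_eq_zero_of_orthogonal hν hx hy hu] at h
  linarith

lemma tripleProd_ne_zero_of_orthogonal (hν : ν ≠ 0) (hu₀ : u ≠ 0) (hu : ν ⬝ᵥ u = 0)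
    (hx : ν ⬝ᵥ x = 0) (huvw : tripleProd u v w = 0) (hxvw : tripleProd x v w ≠ 0) :
    tripleProd x u ν ≠ 0 := by
  intro hxu
  -- `ν × u` is a vector of `ν⊥` on which `(·, u, ν)` does not vanish.
  have hνu : tripleProd (crossProduct ν u) u ν ≠ 0 := by
    rw [tripleProd, cross_dot_cross, dotProduct_comm u ν, hu]
    simp [dotProduct_self_eq_zero, hν, hu₀]
  have h := tripleProd_mul_tripleProd_comm_of_orthogonal hν hu hx (dot_self_cross ν u) huvw
  rw [hxu, mul_zero] at h
  exact hνu ((mul_eq_zero.mp h).resolve_left hxvw)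

lemma tripleProd_div_tripleProd_of_orthogonal (hν : ν ≠ 0) (hu₀ : u ≠ 0) (hu : ν ⬝ᵥ u = 0)
    (hx : ν ⬝ᵥ x = 0) (hy : ν ⬝ᵥ y = 0) (huvw : tripleProd u v w = 0)
    (hxvw : tripleProd x v w ≠ 0) :
    tripleProd x u ν ≠ 0 ∧
      tripleProd y v w / tripleProd x v w = tripleProd y u ν / tripleProd x u ν := by
  have hxu := tripleProd_ne_zero_of_orthogonal hν hu₀ hu hx huvw hxvw
  refine ⟨hxu, (div_eq_div_iff hxvw hxu).mpr ?_⟩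
  exact (tripleProd_mul_tripleProd_comm_of_orthogonal hν hu hy hx huvw).trans (mul_comm _ _)

end OrthogonalPlane

lemma prod_neg_one_sub_mul_div_eq {G K : Type*} [AddGroupWithOne G] [Fintype G] [Field K]
    (t D : G → K) (htD : ∀ i, t i * D i ≠ 0) :
    ∏ i, -((1 - t (i + 1)) * D i) / (t (i - 1) * D (i - 1)) =
      (-1) ^ Fintype.card G * ∏ i, (1 - t i) / t i := by
  have hD : ∏ i, D i ≠ 0 := Finset.prod_ne_zero_iff.mpr fun i _ => right_ne_zero_of_mul (htD i)
  rw [Finset.prod_div_distrib, Finset.prod_neg, Finset.prod_mul_distrib, Finset.prod_mul_distrib,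
    Fintype.prod_equiv (Equiv.addRight 1) (fun i => 1 - t (i + 1)) (fun i => 1 - t i) fun _ => rfl,
    Fintype.prod_equiv (Equiv.subRight 1) (fun i => t (i - 1)) t fun _ => rfl,
    Fintype.prod_equiv (Equiv.subRight 1) (fun i => D (i - 1)) D fun _ => rfl,
    Finset.card_univ, Finset.prod_div_distrib]
  field_simp

theorem stmt2_general (n : ℕ) [NeZero n]
    (A B v w : ZMod n → (Fin 3 → ℝ)) (t : ZMod n → ℝ)
    (a : ZMod n → (Fin 3 → ℝ)) (ha : ∀ i, a i = A (i + 1) - A i)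
    -- all the points `Aᵢ`, `Bᵢ` lie in a common affine plane `π = {x | ⟨ν, x⟩ = d}`
    (ν : Fin 3 → ℝ) (d : ℝ) (hν : ν ≠ 0)
    (hAπ : ∀ i, ν ⬝ᵥ A i = d) (hBπ : ∀ i, ν ⬝ᵥ B i = d)
    (hprev : ∀ i, tripleProd (a (i - 1)) (v i) (w i) ≠ 0)
    (hBs0 : ∀ i, B (i - 1) - A i ∈ Submodule.span ℝ ({v i, w i} : Set (Fin 3 → ℝ)))
    (hBs1 : ∀ i, B i - A i ∈ Submodule.span ℝ ({v i, w i} : Set (Fin 3 → ℝ)))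
    (hBB : ∀ i, B (i - 1) ≠ B i)
    (hAt : ∀ i, A i = t i • B (i - 1) + (1 - t i) • B i) :
    ∏ i : ZMod n, (1 - t i) / t i =
      (-1 : ℝ) ^ n *
        ∏ i : ZMod n, tripleProd (a i) (v i) (w i) / tripleProd (a (i - 1)) (v i) (w i) := by
  set e : ZMod n → (Fin 3 → ℝ) := fun i => B i - B (i - 1) with he
  set D : ZMod n → ℝ := fun i => tripleProd (e i) (e (i + 1)) ν
  have he₀ : ∀ i, e i ≠ 0 := fun i => sub_ne_zero.mpr (hBB i).symm
  have hνe : ∀ i, ν ⬝ᵥ e i = 0 := fun i => by simp [he, dotProduct_sub, hBπ]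
  have hνa : ∀ i, ν ⬝ᵥ a i = 0 := fun i => by simp [ha, dotProduct_sub, hAπ]
  have hevw : ∀ i, tripleProd (e i) (v i) (w i) = 0 := fun i =>
    tripleProd_eq_zero_of_mem_span (by
      simpa [he] using Submodule.sub_mem _ (hBs1 i) (hBs0 i))
  have hae : ∀ i, a i = (1 - t (i + 1)) • e (i + 1) + t i • e i := fun i => by
    simp only [he, ha, hAt, add_sub_cancel_right]
    module
  have hnum : ∀ i, tripleProd (a i) (e i) ν = -((1 - t (i + 1)) * D i) := fun i => by
    rw [hae, tripleProd_add_left, tripleProd_smul_left, tripleProd_smul_left,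
      tripleProd_self_left, tripleProd_swap_left]
    ring
  have hden : ∀ i, tripleProd (a (i - 1)) (e i) ν = t (i - 1) * D (i - 1) := fun i => by
    rw [hae, sub_add_cancel, tripleProd_add_left, tripleProd_smul_left, tripleProd_smul_left,
      tripleProd_self_left]
    simp only [D, sub_add_cancel]
    ring
  have hratio := fun i => tripleProd_div_tripleProd_of_orthogonal hν (he₀ i) (hνe i)
    (hνa (i - 1)) (hνa i) (hevw i) (hprev i)
  have htD : ∀ i, t i * D i ≠ 0 := fun i => by
    have h := (hratio (i + 1)).1
    rwa [hden, add_sub_cancel_right] at h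
  simp only [fun i => (hratio i).2, hnum, hden]
  rw [prod_neg_one_sub_mul_div_eq t D htD, ZMod.card, ← mul_assoc, ← mul_pow]
  norm_num

/-- **Generalized Ceva–Menelaus identity.**  For a Kokotsakis mesh with planar faces,
with `Aᵢ = tᵢ B_{i-1} + (1 - tᵢ) Bᵢ`, one has unconditionally
`∏ᵢ (1 - tᵢ)/tᵢ = (-1)ⁿ ∏ᵢ (aᵢ, vᵢ, wᵢ)/(a_{i-1}, vᵢ, wᵢ)`. -/
theorem stmt2 (n : ℕ) [NeZero n] (hn : 3 ≤ n)
    (A B v w : ZMod n → (Fin 3 → ℝ)) (t : ZMod n → ℝ)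
    (a : ZMod n → (Fin 3 → ℝ)) (ha : ∀ i, a i = A (i + 1) - A i)
    -- all the points `Aᵢ`, `Bᵢ` lie in a common affine plane `π = {x | ⟨ν, x⟩ = d}`
    (ν : Fin 3 → ℝ) (d : ℝ) (hν : ν ≠ 0)
    (hAπ : ∀ i, ν ⬝ᵥ A i = d) (hBπ : ∀ i, ν ⬝ᵥ B i = d)
    (hvw : ∀ i, LinearIndependent ℝ ![v i, w i])
    (hprev : ∀ i, tripleProd (a (i - 1)) (v i) (w i) ≠ 0)
    (hnext : ∀ i, tripleProd (a i) (v i) (w i) ≠ 0)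
    (hBv0 : ∀ i, B (i - 1) - A i ≠ 0) (hBv1 : ∀ i, B i - A i ≠ 0)
    (hBs0 : ∀ i, B (i - 1) - A i ∈ Submodule.span ℝ ({v i, w i} : Set (Fin 3 → ℝ)))
    (hBs1 : ∀ i, B i - A i ∈ Submodule.span ℝ ({v i, w i} : Set (Fin 3 → ℝ)))
    (hBB : ∀ i, B (i - 1) ≠ B i)
    (ht0 : ∀ i, t i ≠ 0) (ht1 : ∀ i, t i ≠ 1)
    (hAt : ∀ i, A i = t i • B (i - 1) + (1 - t i) • B i) :
    ∏ i : ZMod n, (1 - t i) / t i =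
      (-1 : ℝ) ^ n *
        ∏ i : ZMod n, tripleProd (a i) (v i) (w i) / tripleProd (a (i - 1)) (v i) (w i) :=
  stmt2_general n A B v w t a ha ν d hν hAπ hBπ hprev hBs0 hBs1 hBB hAt
end

section
/- In the planar-face configuration, if the mesh is infinitesimally flexible, i.e. χ(M) = ∏_{i=1}^n (a_{i−1},v_i,w_i)/(a_i,v_i,w_i) = 1, then the closed broken line A_1B_1A_2B_2…A_nB_nA_1 satisfies the generalized Ceva–Menelaus condition ∏_{i=1}^n (1−t_i)/t_i = (−1)^n. -/
open Matrix

private lemma trip_eq (x b c : Fin 3 → ℝ) :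
    tripleProd x b c =
      x 0 * (b 1 * c 2 - b 2 * c 1) + x 1 * (b 2 * c 0 - b 0 * c 2) +
        x 2 * (b 0 * c 1 - b 1 * c 0) := by
  simp [tripleProd, cross_apply, dotProduct, Fin.sum_univ_three]

private lemma trip_smul_add (r : ℝ) (y x b c : Fin 3 → ℝ) :
    tripleProd (r • y + x) b c = r * tripleProd y b c + tripleProd x b c := by
  simp only [trip_eq, Pi.add_apply, Pi.smul_apply, smul_eq_mul]; ring

private lemma trip_sub (x y b c : Fin 3 → ℝ) :
    tripleProd (x - y) b c = tripleProd x b c - tripleProd y b c := by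
  simp only [trip_eq, Pi.sub_apply]; ring

private lemma trip_swap (x y c : Fin 3 → ℝ) : tripleProd x y c = - tripleProd y x c := by
  simp only [trip_eq]; ring

private lemma trip_span (x v w : Fin 3 → ℝ)
    (h : x ∈ Submodule.span ℝ ({v, w} : Set (Fin 3 → ℝ))) : tripleProd x v w = 0 := by
  rw [Submodule.mem_span_pair] at h
  obtain ⟨p, q, rfl⟩ := h
  simp only [trip_eq, Pi.add_apply, Pi.smul_apply, smul_eq_mul]; ring

private lemma quad (x y z ν u : Fin 3 → ℝ) :
    tripleProd y z ν * (u ⬝ᵥ x) - tripleProd x z ν * (u ⬝ᵥ y)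
      + tripleProd x y ν * (u ⬝ᵥ z) - tripleProd x y z * (u ⬝ᵥ ν) = 0 := by
  simp only [trip_eq, dotProduct, Fin.sum_univ_three]; ring

private lemma quad' (x y z ν v w : Fin 3 → ℝ) :
    tripleProd y z ν * tripleProd x v w - tripleProd x z ν * tripleProd y v w
      + tripleProd x y ν * tripleProd z v w - tripleProd x y z * tripleProd ν v w = 0 := by
  have h := quad x y z ν (crossProduct v w)
  simpa only [tripleProd, dotProduct_comm] using h

private lemma key_prop (x y z ν v w : Fin 3 → ℝ) (hν : ν ≠ 0)
    (hx : ν ⬝ᵥ x = 0) (hy : ν ⬝ᵥ y = 0) (hz : ν ⬝ᵥ z = 0)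
    (hzvw : tripleProd z v w = 0) :
    tripleProd x v w * tripleProd y z ν = tripleProd y v w * tripleProd x z ν := by
  have hνν : ν ⬝ᵥ ν ≠ 0 := fun h => hν (dotProduct_self_eq_zero.mp h)
  have hdet : tripleProd x y z = 0 := by
    have h := quad x y z ν ν
    rw [hx, hy, hz] at h
    simp only [mul_zero, sub_zero, zero_sub, add_zero, neg_eq_zero, zero_add] at h
    rcases mul_eq_zero.mp h with h | h
    · exact h
    · exact absurd h hνν
  have h := quad' x y z ν v w
  rw [hzvw, hdet] at h
  ring_nf at h ⊢
  linarith

private lemma cross_triple (a b c : Fin 3 → ℝ) :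
    crossProduct a (crossProduct b c) = (a ⬝ᵥ c) • b - (a ⬝ᵥ b) • c := by
  funext i
  fin_cases i <;>
    simp [cross_apply, dotProduct, Fin.sum_univ_three] <;> ring

private lemma cross_zero_parallel (u z : Fin 3 → ℝ) (h : crossProduct u z = 0) :
    (u ⬝ᵥ z) • u = (u ⬝ᵥ u) • z := by
  have h2 := cross_triple u u z
  rw [h] at h2
  rw [show (crossProduct u) (0 : Fin 3 → ℝ) = 0 by simp] at h2
  exact (sub_eq_zero.mp h2.symm)

private lemma trip_nz (y z ν v w : Fin 3 → ℝ) (hν : ν ≠ 0)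
    (hy : ν ⬝ᵥ y = 0) (hz : ν ⬝ᵥ z = 0) (hzne : z ≠ 0)
    (hzvw : tripleProd z v w = 0) (hyvw : tripleProd y v w ≠ 0) :
    tripleProd y z ν ≠ 0 := by
  intro h0
  have hνν : ν ⬝ᵥ ν ≠ 0 := fun h => hν (dotProduct_self_eq_zero.mp h)
  have hzz : z ⬝ᵥ z ≠ 0 := fun h => hzne (dotProduct_self_eq_zero.mp h)
  have hc : crossProduct ν (crossProduct y z) = 0 := by
    rw [cross_triple, hy, hz]; simp
  have hd : ν ⬝ᵥ (crossProduct y z) = 0 := by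
    have hcyc : tripleProd ν y z = 0 := by
      rw [show tripleProd ν y z = tripleProd y z ν by simp only [trip_eq]; ring, h0]
    exact hcyc
  have hp := cross_zero_parallel ν (crossProduct y z) hc
  rw [hd, zero_smul] at hp
  have hyz : crossProduct y z = 0 := by
    rcases smul_eq_zero.mp hp.symm with h | h
    · exact absurd h hνν
    · exact h
  have hzy : crossProduct z y = 0 := by
    rw [← cross_anticomm, hyz, neg_zero]
  have hp2 := cross_zero_parallel z y hzy
  -- (z⬝y) • z = (z⬝z) • y ; apply tripleProd · v w
  have happ := congrArg (fun x => tripleProd x v w) hp2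
  have hs : ∀ (r : ℝ) (x : Fin 3 → ℝ), tripleProd (r • x) v w = r * tripleProd x v w := by
    intro r x; simp only [trip_eq, Pi.smul_apply, smul_eq_mul]; ring
  rw [hs, hs, hzvw, mul_zero] at happ
  exact hyvw (by
    have := happ.symm
    rcases mul_eq_zero.mp this with h | h
    · exact absurd h hzz
    · exact h)

/-- **Generalized Ceva–Menelaus condition for infinitesimally flexible meshes.**
If a Kokotsakis mesh with planar faces is infinitesimally flexible, i.e. `χ(M) = 1`,
then the closed broken line `A₁B₁A₂B₂…AₙBₙA₁` satisfies
`∏ᵢ (1 - tᵢ)/tᵢ = (-1)ⁿ`. -/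
theorem stmt3 (n : ℕ) [NeZero n] (hn : 3 ≤ n)
    (A B v w : ZMod n → (Fin 3 → ℝ)) (t : ZMod n → ℝ)
    (a : ZMod n → (Fin 3 → ℝ)) (ha : ∀ i, a i = A (i + 1) - A i)
    -- all the points `Aᵢ`, `Bᵢ` lie in a common affine plane `π = {x | ⟨ν, x⟩ = d}`
    (ν : Fin 3 → ℝ) (d : ℝ) (hν : ν ≠ 0)
    (hAπ : ∀ i, ν ⬝ᵥ A i = d) (hBπ : ∀ i, ν ⬝ᵥ B i = d)
    (hvw : ∀ i, LinearIndependent ℝ ![v i, w i])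
    (hprev : ∀ i, tripleProd (a (i - 1)) (v i) (w i) ≠ 0)
    (hnext : ∀ i, tripleProd (a i) (v i) (w i) ≠ 0)
    (hBv0 : ∀ i, B (i - 1) - A i ≠ 0) (hBv1 : ∀ i, B i - A i ≠ 0)
    (hBs0 : ∀ i, B (i - 1) - A i ∈ Submodule.span ℝ ({v i, w i} : Set (Fin 3 → ℝ)))
    (hBs1 : ∀ i, B i - A i ∈ Submodule.span ℝ ({v i, w i} : Set (Fin 3 → ℝ)))
    (hBB : ∀ i, B (i - 1) ≠ B i)
    (ht0 : ∀ i, t i ≠ 0) (ht1 : ∀ i, t i ≠ 1)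
    (hAt : ∀ i, A i = t i • B (i - 1) + (1 - t i) • B i)
    -- infinitesimal flexibility: `χ(M) = 1`
    (hflex : ∏ i : ZMod n, tripleProd (a (i - 1)) (v i) (w i) / tripleProd (a i) (v i) (w i) = 1) :
    ∏ i : ZMod n, (1 - t i) / t i = (-1 : ℝ) ^ n := by
  have hcard : Fintype.card (ZMod n) = n := ZMod.card n
  set e : ZMod n → (Fin 3 → ℝ) := fun i => B i - B (i - 1) with he
  -- index shifts for products
  have shift_down : ∀ f : ZMod n → ℝ, ∏ i : ZMod n, f (i - 1) = ∏ i : ZMod n, f i :=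
    fun f => Fintype.prod_equiv (Equiv.subRight (1 : ZMod n)) _ _ (fun i => rfl)
  have shift_up : ∀ f : ZMod n → ℝ, ∏ i : ZMod n, f (i + 1) = ∏ i : ZMod n, f i :=
    fun f => Fintype.prod_equiv (Equiv.addRight (1 : ZMod n)) _ _ (fun i => rfl)
  -- basic facts about e
  have hen : ∀ i, e i ≠ 0 := fun i => sub_ne_zero.mpr (hBB i).symm
  have heν : ∀ i, ν ⬝ᵥ e i = 0 := by
    intro i
    simp only [he]
    rw [dotProduct_sub, hBπ, hBπ, sub_self]
  have he0 : ∀ i, tripleProd (e i) (v i) (w i) = 0 := by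
    intro i
    have hsplit : e i = (B i - A i) - (B (i - 1) - A i) := by simp only [he]; abel
    rw [hsplit, trip_sub, trip_span _ _ _ (hBs1 i), trip_span _ _ _ (hBs0 i), sub_zero]
  -- step 1 : (a_{i-1}, v_i, w_i) = t_{i-1} * (e_{i-1}, v_i, w_i)
  have hstep1 : ∀ i, tripleProd (a (i - 1)) (v i) (w i)
      = t (i - 1) * tripleProd (e (i - 1)) (v i) (w i) := by
    intro i
    have hv : a (i - 1) = t (i - 1) • e (i - 1) + (A i - B (i - 1)) := by
      rw [ha (i - 1), sub_add_cancel, hAt (i - 1)]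
      simp only [he]
      module
    have h0 : tripleProd (A i - B (i - 1)) (v i) (w i) = 0 := by
      have hneg : A i - B (i - 1) = (0 : Fin 3 → ℝ) - (B (i - 1) - A i) := by abel
      rw [hneg, trip_sub, trip_span _ _ _ (hBs0 i)]
      simp [trip_eq]
    rw [hv, trip_smul_add, h0, add_zero]
  -- step 2 : (a_i, v_i, w_i) = (1 - t_{i+1}) * (e_{i+1}, v_i, w_i)
  have hstep2 : ∀ i, tripleProd (a i) (v i) (w i)
      = (1 - t (i + 1)) * tripleProd (e (i + 1)) (v i) (w i) := by
    intro i
    have hv : a i = (1 - t (i + 1)) • e (i + 1) + (B i - A i) := by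
      rw [ha i, hAt (i + 1)]
      simp only [he, add_sub_cancel_right]
      module
    rw [hv, trip_smul_add, trip_span _ _ _ (hBs1 i), add_zero]
  -- nonvanishing
  have hg1ne : ∀ i, tripleProd (e (i - 1)) (v i) (w i) ≠ 0 := by
    intro i h
    exact hprev i (by rw [hstep1 i, h, mul_zero])
  have hg2ne : ∀ i, tripleProd (e (i + 1)) (v i) (w i) ≠ 0 := by
    intro i h
    exact hnext i (by rw [hstep2 i, h, mul_zero])
  set S : ZMod n → ℝ := fun j => tripleProd (e j) (e (j + 1)) ν with hS
  have hSne : ∀ i, S i ≠ 0 := by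
    intro i h
    have hnz := trip_nz (e (i + 1)) (e i) ν (v i) (w i) hν (heν _) (heν _) (hen i)
      (he0 i) (hg2ne i)
    apply hnz
    rw [trip_swap]
    simp only [hS] at h
    rw [h, neg_zero]
  -- key identity : g1 i * S i = -(g2 i * S (i-1))
  have hkey : ∀ i, tripleProd (e (i - 1)) (v i) (w i) * S i
      = -(tripleProd (e (i + 1)) (v i) (w i) * S (i - 1)) := by
    intro i
    have h := key_prop (e (i - 1)) (e (i + 1)) (e i) ν (v i) (w i) hν
      (heν _) (heν _) (heν _) (he0 i)
    have h1 : tripleProd (e (i + 1)) (e i) ν = -(S i) := by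
      simp only [hS]; rw [trip_swap]
    have h2 : tripleProd (e (i - 1)) (e i) ν = S (i - 1) := by
      simp only [hS, sub_add_cancel]
    rw [h1, h2] at h
    linarith
  -- take products
  have hSprodne : (∏ i : ZMod n, S i) ≠ 0 :=
    Finset.prod_ne_zero_iff.mpr (fun i _ => hSne i)
  have hg2prodne : (∏ i : ZMod n, tripleProd (e (i + 1)) (v i) (w i)) ≠ 0 :=
    Finset.prod_ne_zero_iff.mpr (fun i _ => hg2ne i)
  have htprodne : (∏ i : ZMod n, t i) ≠ 0 :=
    Finset.prod_ne_zero_iff.mpr (fun i _ => ht0 i)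
  have hprodkey : (∏ i : ZMod n, tripleProd (e (i - 1)) (v i) (w i)) * (∏ i : ZMod n, S i)
      = (-1 : ℝ) ^ n * ((∏ i : ZMod n, tripleProd (e (i + 1)) (v i) (w i))
          * (∏ i : ZMod n, S i)) := by
    calc (∏ i : ZMod n, tripleProd (e (i - 1)) (v i) (w i)) * (∏ i : ZMod n, S i)
        = ∏ i : ZMod n, (tripleProd (e (i - 1)) (v i) (w i) * S i) :=
          (Finset.prod_mul_distrib).symm
      _ = ∏ i : ZMod n, ((-1 : ℝ) * (tripleProd (e (i + 1)) (v i) (w i) * S (i - 1))) := by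
          refine Finset.prod_congr rfl (fun i _ => ?_)
          rw [hkey i]; ring
      _ = (-1 : ℝ) ^ n * ∏ i : ZMod n, (tripleProd (e (i + 1)) (v i) (w i) * S (i - 1)) := by
          rw [Finset.prod_mul_distrib, Finset.prod_const, Finset.card_univ, hcard]
      _ = (-1 : ℝ) ^ n * ((∏ i : ZMod n, tripleProd (e (i + 1)) (v i) (w i))
            * (∏ i : ZMod n, S i)) := by
          rw [Finset.prod_mul_distrib, shift_down S]
  have hprodkey' : (∏ i : ZMod n, tripleProd (e (i - 1)) (v i) (w i)) * (∏ i : ZMod n, S i)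
      = ((-1 : ℝ) ^ n * (∏ i : ZMod n, tripleProd (e (i + 1)) (v i) (w i)))
          * (∏ i : ZMod n, S i) := by rw [hprodkey]; ring
  have hg1eq := mul_right_cancel₀ hSprodne hprodkey'
  -- use the flexibility condition
  have hF2ne : (∏ i : ZMod n, tripleProd (a i) (v i) (w i)) ≠ 0 :=
    Finset.prod_ne_zero_iff.mpr (fun i _ => hnext i)
  rw [Finset.prod_div_distrib, div_eq_one_iff_eq hF2ne] at hflex
  have hF1 : (∏ i : ZMod n, tripleProd (a (i - 1)) (v i) (w i))
      = (∏ i : ZMod n, t i) * (∏ i : ZMod n, tripleProd (e (i - 1)) (v i) (w i)) := by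
    calc (∏ i : ZMod n, tripleProd (a (i - 1)) (v i) (w i))
        = ∏ i : ZMod n, (t (i - 1) * tripleProd (e (i - 1)) (v i) (w i)) :=
          Finset.prod_congr rfl (fun i _ => hstep1 i)
      _ = (∏ i : ZMod n, t (i - 1)) * (∏ i : ZMod n, tripleProd (e (i - 1)) (v i) (w i)) :=
          Finset.prod_mul_distrib
      _ = _ := by rw [shift_down t]
  have hF2 : (∏ i : ZMod n, tripleProd (a i) (v i) (w i))
      = (∏ i : ZMod n, (1 - t i)) * (∏ i : ZMod n, tripleProd (e (i + 1)) (v i) (w i)) := by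
    calc (∏ i : ZMod n, tripleProd (a i) (v i) (w i))
        = ∏ i : ZMod n, ((1 - t (i + 1)) * tripleProd (e (i + 1)) (v i) (w i)) :=
          Finset.prod_congr rfl (fun i _ => hstep2 i)
      _ = (∏ i : ZMod n, (1 - t (i + 1))) * (∏ i : ZMod n, tripleProd (e (i + 1)) (v i) (w i)) :=
          Finset.prod_mul_distrib
      _ = _ := by rw [shift_up (fun j => 1 - t j)]
  rw [hF1, hF2, hg1eq] at hflex
  -- cancel the nonzero product of g2's
  have hflex' : ((∏ i : ZMod n, t i) * (-1 : ℝ) ^ n)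
        * (∏ i : ZMod n, tripleProd (e (i + 1)) (v i) (w i))
      = (∏ i : ZMod n, (1 - t i)) * (∏ i : ZMod n, tripleProd (e (i + 1)) (v i) (w i)) := by
    rw [mul_assoc]; exact hflex
  have hmain := mul_right_cancel₀ hg2prodne hflex'
  rw [Finset.prod_div_distrib, ← hmain, mul_comm, mul_div_assoc,
    div_self htprodne, mul_one]
end

section
/- Let n = 3, let B_1, B_2, B_3 ∈ ℝ² be affinely independent, t_1, t_2, t_3 ∈ ℝ \ {0,1}, A_i := t_i·B_{i−1} + (1−t_i)·B_i (with B_0 = B_3), and suppose the lines through B_2, A_1 and through B_3, A_2 are not parallel. Then ∏_{i=1}^3 (1−t_i)/t_i = 1 if and only if the three lines through B_1 and A_3, through B_2 and A_1, and through B_3 and A_2 have a common point (Ceva configuration). -/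
/-!
Write points in barycentric coordinates `(x, y, z)` with respect to `B₁B₂B₃`. A point lies on
the cevian `B₂A₁` iff `t₁ x = (1 - t₁) z`, and cyclically on `B₃A₂` and `B₁A₃`. Multiplying the
three relations gives Ceva's identity, the weights being nonzero because no `tᵢ` is `1`.
Conversely, the cevians `B₂A₁` and `B₃A₂` meet at the point with weights proportional to
`(t₂(1 - t₁), (1 - t₂)(1 - t₁), t₁t₂)`, whose sum `1 - t₁ + t₁t₂` is nonzero since the two
cevians are not parallel; the third relation for this point is exactly Ceva's identity.
-/

section Barycentric

variable {k V : Type*} [Field k] [AddCommGroup V] [Module k V]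

lemma mem_affineSpan_pair_iff_exists_smul_add_smul {p p₁ p₂ : V} :
    p ∈ line[k, p₁, p₂] ↔ ∃ r : k, (1 - r) • p₁ + r • p₂ = p := by
  simp only [mem_affineSpan_pair_iff_exists_lineMap_eq, AffineMap.lineMap_apply_module]

lemma AffineIndependent.eq_of_smul_add_smul_add_smul_eq {p₀ p₁ p₂ : V}
    (h : AffineIndependent k ![p₀, p₁, p₂]) {a b c a' b' c' : k}
    (hw : a + b + c = a' + b' + c')
    (hp : a • p₀ + b • p₁ + c • p₂ = a' • p₀ + b' • p₁ + c' • p₂) :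
    a = a' ∧ b = b' ∧ c = c' := by
  have := h.eq_of_sum_eq_sum (s := .univ) (w₁ := ![a, b, c]) (w₂ := ![a', b', c'])
    (by simpa [Fin.sum_univ_three] using hw) (by simpa [Fin.sum_univ_three] using hp)
  exact ⟨this 0 (by simp), this 1 (by simp), this 2 (by simp)⟩

lemma exists_barycentric_of_mem_cevian {p₀ p₁ p₂ p : V} {t : k}
    (hp : p ∈ line[k, p₁, t • p₂ + (1 - t) • p₀]) :
    ∃ x y z : k, x + y + z = 1 ∧ t * x = (1 - t) * z ∧ p = x • p₀ + y • p₁ + z • p₂ := by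
  obtain ⟨r, rfl⟩ := mem_affineSpan_pair_iff_exists_smul_add_smul.1 hp
  exact ⟨r * (1 - t), 1 - r, r * t, by ring, by ring, by module⟩

lemma mem_cevian_iff {p₀ p₁ p₂ : V} (h : AffineIndependent k ![p₀, p₁, p₂]) {x y z t : k}
    (hsum : x + y + z = 1) :
    x • p₀ + y • p₁ + z • p₂ ∈ line[k, p₁, t • p₂ + (1 - t) • p₀] ↔ t * x = (1 - t) * z := by
  constructor
  · intro hp
    obtain ⟨x', y', z', hsum', hrel, hp'⟩ := exists_barycentric_of_mem_cevian hp
    obtain ⟨rfl, -, rfl⟩ := h.eq_of_smul_add_smul_add_smul_eq (hsum.trans hsum'.symm) hp'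
    exact hrel
  · intro hrel
    refine mem_affineSpan_pair_iff_exists_smul_add_smul.2 ⟨x + z, ?_⟩
    linear_combination (norm := module) hrel • (p₂ - p₀) - hsum • p₁

lemma cevians_parallel_of_eq_zero {p₀ p₁ p₂ : V} {t₀ t₁ : k} (ht₁ : t₁ ≠ 1)
    (hD : 1 - t₀ + t₀ * t₁ = 0) :
    (line[k, p₁, t₀ • p₂ + (1 - t₀) • p₀]).Parallel line[k, p₂, t₁ • p₀ + (1 - t₁) • p₁] := by
  rw [AffineSubspace.affineSpan_pair_parallel_iff_vectorSpan_eq, vectorSpan_pair, vectorSpan_pair]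
  have hv : p₂ -ᵥ (t₁ • p₀ + (1 - t₁) • p₁) = (t₁ - 1) • (p₁ -ᵥ (t₀ • p₂ + (1 - t₀) • p₀)) := by
    simp only [vsub_eq_sub]
    linear_combination (norm := module) hD • (p₂ - p₀)
  rw [hv, Submodule.span_singleton_smul_eq (isUnit_iff_ne_zero.2 (sub_ne_zero.2 ht₁))]

end Barycentric

section CevianRelations

variable {k : Type*} [Field k]

lemma ceva_of_cevian_relations {x y z t₁ t₂ t₃ : k} (hsum : x + y + z = 1)
    (ht₁ : t₁ ≠ 1) (ht₂ : t₂ ≠ 1) (ht₃ : t₃ ≠ 1)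
    (h₁ : t₁ * x = (1 - t₁) * z) (h₂ : t₂ * y = (1 - t₂) * x) (h₃ : t₃ * z = (1 - t₃) * y) :
    (1 - t₁) * (1 - t₂) * (1 - t₃) = t₁ * t₂ * t₃ := by
  have hz : x = 0 → z = 0 := fun h ↦ by simpa [h, sub_eq_zero, Ne.symm ht₁] using h₁
  have hy : z = 0 → y = 0 := fun h ↦ by simpa [h, sub_eq_zero, Ne.symm ht₃] using h₃
  have hx : y = 0 → x = 0 := fun h ↦ by simpa [h, sub_eq_zero, Ne.symm ht₂] using h₂
  have hxyz : x * y * z ≠ 0 := by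
    simp only [mul_ne_zero_iff]
    exact ⟨⟨fun h ↦ by simp_all, fun h ↦ by simp_all⟩, fun h ↦ by simp_all⟩
  refine mul_right_cancel₀ hxyz ?_
  linear_combination -(t₂ * y * t₃ * z) * h₁ - ((1 - t₁) * z * t₃ * z) * h₂
    - ((1 - t₁) * z * (1 - t₂) * x) * h₃

lemma exists_cevian_relations_of_ceva {t₁ t₂ t₃ : k} (hD : 1 - t₁ + t₁ * t₂ ≠ 0)
    (hceva : (1 - t₁) * (1 - t₂) * (1 - t₃) = t₁ * t₂ * t₃) :
    ∃ x y z : k, x + y + z = 1 ∧ t₁ * x = (1 - t₁) * z ∧ t₂ * y = (1 - t₂) * x ∧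
      t₃ * z = (1 - t₃) * y := by
  refine ⟨t₂ * (1 - t₁) / (1 - t₁ + t₁ * t₂), (1 - t₂) * (1 - t₁) / (1 - t₁ + t₁ * t₂),
    t₁ * t₂ / (1 - t₁ + t₁ * t₂), ?_, by ring, by ring, ?_⟩
  · rw [← add_div, ← add_div, div_eq_one_iff_eq hD]
    ring
  · field_simp
    linear_combination -hceva

end CevianRelations

/-- **Ceva configuration.**  For an affinely independent triangle `B₁B₂B₃` in the plane
and `Aᵢ = tᵢ B_{i-1} + (1 - tᵢ) Bᵢ` (indices mod 3), the product `∏ᵢ (1 - tᵢ)/tᵢ`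
equals `1` iff the lines `B₁A₃`, `B₂A₁` and `B₃A₂` are concurrent. -/
theorem stmt4 (B₁ B₂ B₃ : Fin 2 → ℝ) (t₁ t₂ t₃ : ℝ)
    (hB : AffineIndependent ℝ ![B₁, B₂, B₃])
    (ht₁0 : t₁ ≠ 0) (ht₁1 : t₁ ≠ 1) (ht₂0 : t₂ ≠ 0) (ht₂1 : t₂ ≠ 1)
    (ht₃0 : t₃ ≠ 0) (ht₃1 : t₃ ≠ 1)
    (A₁ A₂ A₃ : Fin 2 → ℝ)
    (hA₁ : A₁ = t₁ • B₃ + (1 - t₁) • B₁)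
    (hA₂ : A₂ = t₂ • B₁ + (1 - t₂) • B₂)
    (hA₃ : A₃ = t₃ • B₂ + (1 - t₃) • B₃)
    (hnp : ¬ AffineSubspace.Parallel
      (affineSpan ℝ ({B₂, A₁} : Set (Fin 2 → ℝ)))
      (affineSpan ℝ ({B₃, A₂} : Set (Fin 2 → ℝ)))) :
    ((1 - t₁) / t₁) * ((1 - t₂) / t₂) * ((1 - t₃) / t₃) = 1
    ↔ ∃ P : Fin 2 → ℝ,
        P ∈ affineSpan ℝ ({B₁, A₃} : Set (Fin 2 → ℝ)) ∧
        P ∈ affineSpan ℝ ({B₂, A₁} : Set (Fin 2 → ℝ)) ∧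
        P ∈ affineSpan ℝ ({B₃, A₂} : Set (Fin 2 → ℝ)) := by
  subst hA₁ hA₂ hA₃
  rw [div_mul_div_comm, div_mul_div_comm,
    div_eq_one_iff_eq (mul_ne_zero (mul_ne_zero ht₁0 ht₂0) ht₃0)]
  have hB₂₃₁ : AffineIndependent ℝ ![B₂, B₃, B₁] := hB.comm_left.comm_right
  have hB₃₁₂ : AffineIndependent ℝ ![B₃, B₁, B₂] := hB₂₃₁.comm_left.comm_right
  have rotate {x y z : ℝ} : x • B₁ + y • B₂ + z • B₃ = y • B₂ + z • B₃ + x • B₁ ∧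
      x • B₁ + y • B₂ + z • B₃ = z • B₃ + x • B₁ + y • B₂ := ⟨by abel, by abel⟩
  constructor
  · intro hceva
    have hD : 1 - t₁ + t₁ * t₂ ≠ 0 := fun hD ↦ hnp (cevians_parallel_of_eq_zero ht₂1 hD)
    obtain ⟨x, y, z, hsum, h₁, h₂, h₃⟩ := exists_cevian_relations_of_ceva hD hceva
    refine ⟨x • B₁ + y • B₂ + z • B₃, ?_, (mem_cevian_iff hB hsum).2 h₁, ?_⟩
    · rw [rotate.2]
      exact (mem_cevian_iff hB₃₁₂ (by linear_combination hsum)).2 h₃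
    · rw [rotate.1]
      exact (mem_cevian_iff hB₂₃₁ (by linear_combination hsum)).2 h₂
  · rintro ⟨P, hP₃, hP₁, hP₂⟩
    obtain ⟨x, y, z, hsum, h₁, rfl⟩ := exists_barycentric_of_mem_cevian hP₁
    rw [rotate.1] at hP₂
    rw [rotate.2] at hP₃
    exact ceva_of_cevian_relations hsum ht₁1 ht₂1 ht₃1 h₁
      ((mem_cevian_iff hB₂₃₁ (by linear_combination hsum)).1 hP₂)
      ((mem_cevian_iff hB₃₁₂ (by linear_combination hsum)).1 hP₃)
end

section
/- Let n = 4, let B_1, B_2, B_3, B_4 ∈ ℝ² be points no three of which are collinear, t_1,…,t_4 ∈ ℝ \ {0,1}, A_i := t_i·B_{i−1} + (1−t_i)·B_i (with B_0 = B_4). Suppose A_2 ≠ A_3, A_4 ≠ A_1, B_1 ≠ B_3, and the lines through A_2, A_3 and through A_4, A_1 are distinct and not parallel. Then ∏_{i=1}^4 (1−t_i)/t_i = 1 if and only if the three lines through B_1 and B_3, through A_2 and A_3, and through A_4 and A_1 have a common point (Desargues configuration). -/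
/-!
Write the line through `X` with direction `d` as `{P | cross (P - X) d = 0}`. For three lines the
combination `∑ cross dⱼ dₖ · cross (P - Xᵢ) dᵢ` (cyclic in `i, j, k`) does not depend on `P`: up to
sign it is the determinant of the coefficients of the three linear equations. So, as soon as two
of the lines meet, the three are concurrent iff this determinant vanishes. For the lines `B₁B₃`,
`A₂A₃`, `A₄A₁` it factors as `(∏ (1 - tᵢ) - ∏ tᵢ) · [B₁B₂B₃] · [B₁B₃B₄]`, and the two triangles
are non-degenerate.
-/

def cross (v w : Fin 2 → ℝ) : ℝ := v 0 * w 1 - v 1 * w 0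

lemma cross_smul_left_self (c : ℝ) (w : Fin 2 → ℝ) : cross (c • w) w = 0 := by
  simp only [cross, Pi.smul_apply, smul_eq_mul]; ring

lemma ne_zero_of_cross_ne_zero_left {v w : Fin 2 → ℝ} (h : cross v w ≠ 0) : v ≠ 0 := by
  rintro rfl; simp [cross] at h

lemma ne_zero_of_cross_ne_zero_right {v w : Fin 2 → ℝ} (h : cross v w ≠ 0) : w ≠ 0 := by
  rintro rfl; simp [cross] at h

lemma cross_eq_zero_iff_exists_smul {v w : Fin 2 → ℝ} (hw : w ≠ 0) :
    cross v w = 0 ↔ ∃ c : ℝ, c • w = v := by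
  refine ⟨fun h => ?_, fun ⟨c, hc⟩ => hc ▸ cross_smul_left_self c w⟩
  unfold cross at h
  have hw' : w 0 ≠ 0 ∨ w 1 ≠ 0 := by
    by_contra! hc
    exact hw (funext fun i => by fin_cases i <;> simp [hc.1, hc.2])
  rcases hw' with h0 | h1
  · refine ⟨v 0 / w 0, funext fun i => ?_⟩
    fin_cases i
    · simp [h0]
    · simp only [Fin.isValue, Fin.mk_one, Pi.smul_apply, smul_eq_mul]
      field_simp
      linear_combination h
  · refine ⟨v 1 / w 1, funext fun i => ?_⟩
    fin_cases i
    · simp only [Fin.isValue, Fin.zero_eta, Pi.smul_apply, smul_eq_mul]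
      field_simp
      linear_combination -h
    · simp [h1]

lemma mem_affineSpan_pair_iff_cross_eq_zero {X Y : Fin 2 → ℝ} (h : X ≠ Y) (P : Fin 2 → ℝ) :
    P ∈ line[ℝ, X, Y] ↔ cross (P - X) (Y - X) = 0 := by
  rw [← AffineSubspace.vsub_right_mem_direction_iff_mem (left_mem_affineSpan_pair ℝ X Y),
    direction_affineSpan, mem_vectorSpan_pair_rev,
    cross_eq_zero_iff_exists_smul (sub_ne_zero_of_ne h.symm)]
  rfl

lemma collinear_of_cross_eq_zero {X Y Z : Fin 2 → ℝ} (h : cross (Y - X) (Z - X) = 0) :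
    Collinear ℝ {X, Y, Z} := by
  by_cases hXY : X = Y
  · subst hXY
    simpa using collinear_pair ℝ X Z
  · have hZ : Z ∈ line[ℝ, X, Y] := by
      rw [mem_affineSpan_pair_iff_cross_eq_zero hXY]
      unfold cross at h ⊢
      linear_combination -h
    have hcol := collinear_insert_of_mem_affineSpan_pair hZ
    rwa [Set.insert_comm Z X, Set.pair_comm Z Y] at hcol

lemma parallel_of_cross_eq_zero {X₁ Y₁ X₂ Y₂ : Fin 2 → ℝ} (h₁ : X₁ ≠ Y₁) (h₂ : X₂ ≠ Y₂)
    (h : cross (Y₁ - X₁) (Y₂ - X₂) = 0) : (line[ℝ, X₁, Y₁]).Parallel line[ℝ, X₂, Y₂] := by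
  have hd₂ : Y₂ - X₂ ≠ 0 := sub_ne_zero_of_ne h₂.symm
  obtain ⟨c, hc⟩ := (cross_eq_zero_iff_exists_smul hd₂).mp h
  have hc0 : c ≠ 0 := by
    rintro rfl
    exact sub_ne_zero_of_ne h₁.symm (by simpa using hc.symm)
  rw [AffineSubspace.affineSpan_pair_parallel_iff_vectorSpan_eq, vectorSpan_pair_rev,
    vectorSpan_pair_rev, eq_comm, Submodule.span_singleton_eq_span_singleton]
  exact ⟨Units.mk0 c hc0, hc⟩

def linesDet (X₁ Y₁ X₂ Y₂ X₃ Y₃ : Fin 2 → ℝ) : ℝ :=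
  cross (Y₂ - X₂) (Y₃ - X₃) * cross X₁ (Y₁ - X₁) + cross (Y₃ - X₃) (Y₁ - X₁) * cross X₂ (Y₂ - X₂)
    + cross (Y₁ - X₁) (Y₂ - X₂) * cross X₃ (Y₃ - X₃)

lemma linesDet_eq_neg_sum (X₁ Y₁ X₂ Y₂ X₃ Y₃ P : Fin 2 → ℝ) :
    linesDet X₁ Y₁ X₂ Y₂ X₃ Y₃ =
      -(cross (Y₂ - X₂) (Y₃ - X₃) * cross (P - X₁) (Y₁ - X₁)
        + cross (Y₃ - X₃) (Y₁ - X₁) * cross (P - X₂) (Y₂ - X₂)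
        + cross (Y₁ - X₁) (Y₂ - X₂) * cross (P - X₃) (Y₃ - X₃)) := by
  simp only [linesDet, cross, Pi.sub_apply]; ring

lemma exists_mem_affineSpan_pair_of_cross_ne_zero {X₁ Y₁ X₂ Y₂ : Fin 2 → ℝ}
    (h : cross (Y₁ - X₁) (Y₂ - X₂) ≠ 0) :
    ∃ P, P ∈ line[ℝ, X₁, Y₁] ∧ P ∈ line[ℝ, X₂, Y₂] := by
  have h₁ : X₁ ≠ Y₁ := fun e => ne_zero_of_cross_ne_zero_left h (by simp [e])
  have h₂ : X₂ ≠ Y₂ := fun e => ne_zero_of_cross_ne_zero_right h (by simp [e])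
  set s := cross (X₂ - X₁) (Y₂ - X₂) / cross (Y₁ - X₁) (Y₂ - X₂)
  refine ⟨X₁ + s • (Y₁ - X₁), ?_, ?_⟩
  · rw [mem_affineSpan_pair_iff_cross_eq_zero h₁, add_sub_cancel_left]
    exact cross_smul_left_self s _
  · rw [mem_affineSpan_pair_iff_cross_eq_zero h₂]
    have hs : s * cross (Y₁ - X₁) (Y₂ - X₂) = cross (X₂ - X₁) (Y₂ - X₂) := div_mul_cancel₀ _ h
    simp only [cross, Pi.sub_apply, Pi.add_apply, Pi.smul_apply, smul_eq_mul] at hs ⊢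
    linear_combination hs

theorem exists_mem_three_lines_iff_linesDet_eq_zero {X₁ Y₁ X₂ Y₂ X₃ Y₃ : Fin 2 → ℝ}
    (h₁ : X₁ ≠ Y₁) (h₂₃ : cross (Y₂ - X₂) (Y₃ - X₃) ≠ 0) :
    (∃ P, P ∈ line[ℝ, X₁, Y₁] ∧ P ∈ line[ℝ, X₂, Y₂] ∧ P ∈ line[ℝ, X₃, Y₃]) ↔
      linesDet X₁ Y₁ X₂ Y₂ X₃ Y₃ = 0 := by
  have h₂ : X₂ ≠ Y₂ := fun e => ne_zero_of_cross_ne_zero_left h₂₃ (by simp [e])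
  have h₃ : X₃ ≠ Y₃ := fun e => ne_zero_of_cross_ne_zero_right h₂₃ (by simp [e])
  simp only [mem_affineSpan_pair_iff_cross_eq_zero h₁, mem_affineSpan_pair_iff_cross_eq_zero h₂,
    mem_affineSpan_pair_iff_cross_eq_zero h₃]
  constructor
  · rintro ⟨P, e₁, e₂, e₃⟩
    rw [linesDet_eq_neg_sum _ _ _ _ _ _ P, e₁, e₂, e₃]; ring
  · intro hdet
    obtain ⟨P, e₂, e₃⟩ := exists_mem_affineSpan_pair_of_cross_ne_zero h₂₃
    rw [mem_affineSpan_pair_iff_cross_eq_zero h₂] at e₂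
    rw [mem_affineSpan_pair_iff_cross_eq_zero h₃] at e₃
    rw [linesDet_eq_neg_sum _ _ _ _ _ _ P, e₂, e₃] at hdet
    refine ⟨P, ?_, e₂, e₃⟩
    simpa [h₂₃] using hdet

lemma linesDet_quadrilateral (B₁ B₂ B₃ B₄ : Fin 2 → ℝ) (t₁ t₂ t₃ t₄ : ℝ) :
    linesDet B₁ B₃ (t₂ • B₁ + (1 - t₂) • B₂) (t₃ • B₂ + (1 - t₃) • B₃)
      (t₄ • B₃ + (1 - t₄) • B₄) (t₁ • B₄ + (1 - t₁) • B₁) =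
    ((1 - t₁) * (1 - t₂) * (1 - t₃) * (1 - t₄) - t₁ * t₂ * t₃ * t₄) *
      cross (B₂ - B₁) (B₃ - B₁) * cross (B₃ - B₁) (B₄ - B₁) := by
  simp only [linesDet, cross, Pi.sub_apply, Pi.add_apply, Pi.smul_apply, smul_eq_mul]; ring

lemma prod_div_eq_one_iff {t₁ t₂ t₃ t₄ : ℝ}
    (h₁ : t₁ ≠ 0) (h₂ : t₂ ≠ 0) (h₃ : t₃ ≠ 0) (h₄ : t₄ ≠ 0) :
    (1 - t₁) / t₁ * ((1 - t₂) / t₂) * ((1 - t₃) / t₃) * ((1 - t₄) / t₄) = 1 ↔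
      (1 - t₁) * (1 - t₂) * (1 - t₃) * (1 - t₄) = t₁ * t₂ * t₃ * t₄ := by
  rw [div_mul_div_comm, div_mul_div_comm, div_mul_div_comm, div_eq_one_iff_eq (by positivity)]

theorem stmt5_general (B₁ B₂ B₃ B₄ : Fin 2 → ℝ) (t₁ t₂ t₃ t₄ : ℝ)
    (hB123 : ¬ Collinear ℝ ({B₁, B₂, B₃} : Set (Fin 2 → ℝ)))
    (hB134 : ¬ Collinear ℝ ({B₁, B₃, B₄} : Set (Fin 2 → ℝ)))
    (ht₁0 : t₁ ≠ 0) (ht₂0 : t₂ ≠ 0)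
    (ht₃0 : t₃ ≠ 0) (ht₄0 : t₄ ≠ 0)
    (A₁ A₂ A₃ A₄ : Fin 2 → ℝ)
    (hA₁ : A₁ = t₁ • B₄ + (1 - t₁) • B₁)
    (hA₂ : A₂ = t₂ • B₁ + (1 - t₂) • B₂)
    (hA₃ : A₃ = t₃ • B₂ + (1 - t₃) • B₃)
    (hA₄ : A₄ = t₄ • B₃ + (1 - t₄) • B₄)
    (hA23 : A₂ ≠ A₃) (hA41 : A₄ ≠ A₁) (hB13 : B₁ ≠ B₃)
    (hnp : ¬ AffineSubspace.Parallel
      (affineSpan ℝ ({A₂, A₃} : Set (Fin 2 → ℝ)))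
      (affineSpan ℝ ({A₄, A₁} : Set (Fin 2 → ℝ)))) :
    ((1 - t₁) / t₁) * ((1 - t₂) / t₂) * ((1 - t₃) / t₃) * ((1 - t₄) / t₄) = 1
    ↔ ∃ P : Fin 2 → ℝ,
        P ∈ affineSpan ℝ ({B₁, B₃} : Set (Fin 2 → ℝ)) ∧
        P ∈ affineSpan ℝ ({A₂, A₃} : Set (Fin 2 → ℝ)) ∧
        P ∈ affineSpan ℝ ({A₄, A₁} : Set (Fin 2 → ℝ)) := by
  have h123 : cross (B₂ - B₁) (B₃ - B₁) ≠ 0 := fun h => hB123 (collinear_of_cross_eq_zero h)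
  have h134 : cross (B₃ - B₁) (B₄ - B₁) ≠ 0 := fun h => hB134 (collinear_of_cross_eq_zero h)
  have hmeet : cross (A₃ - A₂) (A₁ - A₄) ≠ 0 :=
    fun h => hnp (parallel_of_cross_eq_zero hA23 hA41 h)
  rw [prod_div_eq_one_iff ht₁0 ht₂0 ht₃0 ht₄0,
    exists_mem_three_lines_iff_linesDet_eq_zero hB13 hmeet, hA₁, hA₂, hA₃, hA₄,
    linesDet_quadrilateral, mul_eq_zero, mul_eq_zero, sub_eq_zero]
  simp [h123, h134]

/-- **Desargues configuration.**  For four planar points `B₁,…,B₄`, no three of which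
are collinear, and `Aᵢ = tᵢ B_{i-1} + (1 - tᵢ) Bᵢ` (indices mod 4), the product
`∏ᵢ (1 - tᵢ)/tᵢ` equals `1` iff the lines `B₁B₃`, `A₂A₃` and `A₄A₁` are concurrent. -/
theorem stmt5 (B₁ B₂ B₃ B₄ : Fin 2 → ℝ) (t₁ t₂ t₃ t₄ : ℝ)
    (hB123 : ¬ Collinear ℝ ({B₁, B₂, B₃} : Set (Fin 2 → ℝ)))
    (hB124 : ¬ Collinear ℝ ({B₁, B₂, B₄} : Set (Fin 2 → ℝ)))
    (hB134 : ¬ Collinear ℝ ({B₁, B₃, B₄} : Set (Fin 2 → ℝ)))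
    (hB234 : ¬ Collinear ℝ ({B₂, B₃, B₄} : Set (Fin 2 → ℝ)))
    (ht₁0 : t₁ ≠ 0) (ht₁1 : t₁ ≠ 1) (ht₂0 : t₂ ≠ 0) (ht₂1 : t₂ ≠ 1)
    (ht₃0 : t₃ ≠ 0) (ht₃1 : t₃ ≠ 1) (ht₄0 : t₄ ≠ 0) (ht₄1 : t₄ ≠ 1)
    (A₁ A₂ A₃ A₄ : Fin 2 → ℝ)
    (hA₁ : A₁ = t₁ • B₄ + (1 - t₁) • B₁)
    (hA₂ : A₂ = t₂ • B₁ + (1 - t₂) • B₂)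
    (hA₃ : A₃ = t₃ • B₂ + (1 - t₃) • B₃)
    (hA₄ : A₄ = t₄ • B₃ + (1 - t₄) • B₄)
    (hA23 : A₂ ≠ A₃) (hA41 : A₄ ≠ A₁) (hB13 : B₁ ≠ B₃)
    (hlines_ne : affineSpan ℝ ({A₂, A₃} : Set (Fin 2 → ℝ)) ≠
      affineSpan ℝ ({A₄, A₁} : Set (Fin 2 → ℝ)))
    (hnp : ¬ AffineSubspace.Parallel
      (affineSpan ℝ ({A₂, A₃} : Set (Fin 2 → ℝ)))
      (affineSpan ℝ ({A₄, A₁} : Set (Fin 2 → ℝ)))) :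
    ((1 - t₁) / t₁) * ((1 - t₂) / t₂) * ((1 - t₃) / t₃) * ((1 - t₄) / t₄) = 1
    ↔ ∃ P : Fin 2 → ℝ,
        P ∈ affineSpan ℝ ({B₁, B₃} : Set (Fin 2 → ℝ)) ∧
        P ∈ affineSpan ℝ ({A₂, A₃} : Set (Fin 2 → ℝ)) ∧
        P ∈ affineSpan ℝ ({A₄, A₁} : Set (Fin 2 → ℝ)) :=
  stmt5_general B₁ B₂ B₃ B₄ t₁ t₂ t₃ t₄ hB123 hB134 ht₁0 ht₂0 ht₃0 ht₄0 A₁ A₂ A₃ A₄ hA₁ hA₂ hA₃ hA₄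
    hA23 hA41 hB13 hnp
end

section
/- (Menelaus case of Geometric condition II.) Let n = 3, let B_1, B_2, B_3 ∈ ℝ² be affinely independent, t_1, t_2, t_3 ∈ ℝ \ {0,1}, and A_i := t_i·B_{i−1} + (1−t_i)·B_i (with B_0 = B_3). Then ∏_{i=1}^3 (1−t_i)/t_i = −1 if and only if the points A_1, A_2, A_3 are collinear. -/
open Matrix

/-- **Menelaus configuration.**  For an affinely independent triangle `B₁B₂B₃` in the
plane and `Aᵢ = tᵢ B_{i-1} + (1 - tᵢ) Bᵢ` (indices mod 3), the product
`∏ᵢ (1 - tᵢ)/tᵢ` equals `-1` iff the points `A₁, A₂, A₃` are collinear. -/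
theorem stmt7 (B₁ B₂ B₃ : Fin 2 → ℝ) (t₁ t₂ t₃ : ℝ)
    (hB : AffineIndependent ℝ ![B₁, B₂, B₃])
    (ht₁0 : t₁ ≠ 0) (ht₁1 : t₁ ≠ 1) (ht₂0 : t₂ ≠ 0) (ht₂1 : t₂ ≠ 1)
    (ht₃0 : t₃ ≠ 0) (ht₃1 : t₃ ≠ 1)
    (A₁ A₂ A₃ : Fin 2 → ℝ)
    (hA₁ : A₁ = t₁ • B₃ + (1 - t₁) • B₁)
    (hA₂ : A₂ = t₂ • B₁ + (1 - t₂) • B₂)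
    (hA₃ : A₃ = t₃ • B₂ + (1 - t₃) • B₃) :
    ((1 - t₁) / t₁) * ((1 - t₂) / t₂) * ((1 - t₃) / t₃) = -1
    ↔ Collinear ℝ ({A₁, A₂, A₃} : Set (Fin 2 → ℝ)) := by
  have ht₂1' : (1 : ℝ) - t₂ ≠ 0 := sub_ne_zero.mpr (Ne.symm ht₂1)
  -- independence in vector form
  have hind : ∀ a b : ℝ, a • (B₂ - B₁) + b • (B₃ - B₁) = 0 → a = 0 ∧ b = 0 := by
    intro a b hab
    have h := affineIndependent_iff.mp hB Finset.univ ![-(a + b), a, b]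
      (by simp [Fin.sum_univ_three])
      (by
        rw [Fin.sum_univ_three]
        simp only [Matrix.cons_val_zero, Matrix.cons_val_one, Matrix.head_cons,
          Matrix.cons_val_two, Matrix.tail_cons]
        have : a • (B₂ - B₁) + b • (B₃ - B₁)
            = (-(a + b)) • B₁ + a • B₂ + b • B₃ := by
          simp [smul_sub, add_smul, neg_smul]; abel
        rw [← this, hab])
    exact ⟨h 1 (Finset.mem_univ _), h 2 (Finset.mem_univ _)⟩
  -- coordinates of differences
  have h2 : A₂ - A₁ = (1 - t₂) • (B₂ - B₁) + (-t₁) • (B₃ - B₁) := by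
    rw [hA₁, hA₂]; simp [smul_sub, sub_smul, neg_smul]; abel
  have h3 : A₃ - A₁ = t₃ • (B₂ - B₁) + (1 - t₃ - t₁) • (B₃ - B₁) := by
    rw [hA₁, hA₃]; simp [smul_sub, sub_smul]; abel
  -- key determinant condition
  have hkey : ((1 - t₁) / t₁) * ((1 - t₂) / t₂) * ((1 - t₃) / t₃) = -1
      ↔ (1 - t₂) * (1 - t₃ - t₁) + t₁ * t₃ = 0 := by
    rw [div_mul_div_comm, div_mul_div_comm,
      div_eq_iff (mul_ne_zero (mul_ne_zero ht₁0 ht₂0) ht₃0)]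
    constructor <;> intro h <;> linear_combination h
  rw [hkey]
  constructor
  · intro hdet
    rw [collinear_iff_of_mem (Set.mem_insert A₁ _)]
    refine ⟨A₂ - A₁, ?_⟩
    intro p hp
    simp only [Set.mem_insert_iff, Set.mem_singleton_iff] at hp
    rcases hp with h | h | h <;> rw [h]
    · exact ⟨0, by simp⟩
    · exact ⟨1, by simp⟩
    · refine ⟨t₃ / (1 - t₂), ?_⟩
      have key : A₃ - A₁ = (t₃ / (1 - t₂)) • (A₂ - A₁) := by
        rw [h2, h3, smul_add, smul_smul, smul_smul]
        congr 1
        · congr 1; field_simp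
        · congr 1; field_simp; linear_combination hdet
      simp only [vadd_eq_add]
      exact eq_add_of_sub_eq key
  · intro hcol
    rw [collinear_iff_of_mem (Set.mem_insert A₁ _)] at hcol
    obtain ⟨v₀, hv⟩ := hcol
    obtain ⟨r₂, hr₂⟩ := hv A₂ (by simp)
    obtain ⟨r₃, hr₃⟩ := hv A₃ (by simp)
    have e2 : A₂ - A₁ = r₂ • v₀ := by rw [hr₂]; simp
    have e3 : A₃ - A₁ = r₃ • v₀ := by rw [hr₃]; simp
    have hlin : r₃ • (A₂ - A₁) - r₂ • (A₃ - A₁) = 0 := by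
      rw [e2, e3, smul_smul, smul_smul, mul_comm]; simp
    rw [h2, h3] at hlin
    have hc : (r₃ * (1 - t₂) - r₂ * t₃) • (B₂ - B₁)
        + (r₃ * (-t₁) - r₂ * (1 - t₃ - t₁)) • (B₃ - B₁) = 0 := by
      rw [sub_smul, sub_smul, ← hlin]
      simp only [smul_add, smul_smul]; abel
    obtain ⟨hc1, hc2⟩ := hind _ _ hc
    -- if r₃ = 0 then A₃ = A₁, forcing t₃ = 0
    by_cases hr3 : r₃ = 0
    · exfalso
      have : A₃ - A₁ = 0 := by rw [e3, hr3, zero_smul]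
      rw [h3] at this
      exact ht₃0 (hind _ _ this).1
    · have h1 : r₃ * (1 - t₂) = r₂ * t₃ := by linarith
      have h2' : r₃ * t₁ = -(r₂ * (1 - t₃ - t₁)) := by linarith
      have : r₃ * ((1 - t₂) * (1 - t₃ - t₁) + t₁ * t₃) = 0 := by
        linear_combination (1 - t₃ - t₁) * h1 + t₃ * h2'
      rcases mul_eq_zero.mp this with h | h
      · exact absurd h hr3
      · exact h
end

section
/- Let n = 3 in the planar-face configuration, and suppose moreover that the points A_1, A_2, A_3 are affinely independent (not collinear). Then χ(M) = ∏_{i=1}^3 (a_{i−1},v_i,w_i)/(a_i,v_i,w_i) ≠ 1; that is, a Kokotsakis mesh with planar faces whose central face is a nondegenerate triangle is not infinitesimally flexible. -/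
open Matrix

/-! The functional `x ↦ (x, vᵢ, wᵢ)` vanishes on `span {vᵢ, wᵢ}`, so it takes the same value at
`Bᵢ₋₁`, `Aᵢ` and `Bᵢ`. As `Aᵢ₋₁` lies on `Bᵢ₊₁Bᵢ₋₁` and `Aᵢ₊₁` on `BᵢBᵢ₊₁`, this gives
`(aᵢ₋₁, vᵢ, wᵢ) = -tᵢ₋₁ Gᵢ` and `(aᵢ, vᵢ, wᵢ) = (1 - tᵢ₊₁) Gᵢ` with `Gᵢ = (Bᵢ₊₁ - Aᵢ, vᵢ, wᵢ)`.
Hence `χ(M) = 1` is the Menelaus relation `t₀t₁t₂ + (1 - t₀)(1 - t₁)(1 - t₂) = 0` for the points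
`Aᵢ` on the sides of the triangle `B₀B₁B₂`, which by the converse of Menelaus' theorem makes the
`Aᵢ` collinear. -/

noncomputable def tripleProdLeft (v w : Fin 3 → ℝ) : (Fin 3 → ℝ) →ₗ[ℝ] ℝ :=
  (dotProductBilin ℝ ℝ).flip (v ⨯₃ w)

@[simp]
lemma tripleProdLeft_apply (v w x : Fin 3 → ℝ) : tripleProdLeft v w x = tripleProd x v w := rfl

lemma span_pair_le_ker_tripleProdLeft (v w : Fin 3 → ℝ) :
    Submodule.span ℝ {v, w} ≤ LinearMap.ker (tripleProdLeft v w) := by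
  rw [Submodule.span_le, Set.insert_subset_iff, Set.singleton_subset_iff]
  exact ⟨dot_self_cross v w, dot_cross_self v w⟩

lemma ZMod.sub_one_sub_one_three (i : ZMod 3) : i - 1 - 1 = i + 1 := by
  revert i; decide

section Menelaus

variable {K E : Type*} [Field K] [AddCommGroup E] [Module K E] {A B : ZMod 3 → E} {t : ZMod 3 → K}

lemma map_sub_sub_one_of_inscribed (φ : E →ₗ[K] K)
    (hAt : ∀ i, A i = t i • B (i - 1) + (1 - t i) • B i) {i : ZMod 3}
    (hB : φ (B (i - 1) - A i) = 0) :
    φ (A i - A (i - 1)) = -t (i - 1) * φ (B (i + 1) - A i) := by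
  have h : A i - A (i - 1) = -t (i - 1) • (B (i + 1) - A i) - (1 - t (i - 1)) • (B (i - 1) - A i) := by
    rw [hAt (i - 1), ZMod.sub_one_sub_one_three]
    module
  rw [h, map_sub, map_smul, map_smul, hB, smul_eq_mul, smul_zero, sub_zero]

lemma map_add_one_sub_of_inscribed (φ : E →ₗ[K] K)
    (hAt : ∀ i, A i = t i • B (i - 1) + (1 - t i) • B i) {i : ZMod 3}
    (hB : φ (B i - A i) = 0) :
    φ (A (i + 1) - A i) = (1 - t (i + 1)) * φ (B (i + 1) - A i) := by
  have h : A (i + 1) - A i = t (i + 1) • (B i - A i) + (1 - t (i + 1)) • (B (i + 1) - A i) := by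
    rw [hAt (i + 1), add_sub_cancel_right]
    module
  rw [h, map_add, map_smul, map_smul, hB, smul_zero, zero_add, smul_eq_mul]

lemma map_sub_sub_one_div_map_add_one_sub_of_inscribed (φ : E →ₗ[K] K)
    (hAt : ∀ i, A i = t i • B (i - 1) + (1 - t i) • B i) {i : ZMod 3}
    (hB₀ : φ (B (i - 1) - A i) = 0) (hB₁ : φ (B i - A i) = 0)
    (hne : φ (A (i + 1) - A i) ≠ 0) :
    φ (A i - A (i - 1)) / φ (A (i + 1) - A i) = -t (i - 1) / (1 - t (i + 1)) := by
  rw [map_add_one_sub_of_inscribed φ hAt hB₁] at hne ⊢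
  rw [map_sub_sub_one_of_inscribed φ hAt hB₀, mul_div_mul_right _ _ (right_ne_zero_of_mul hne)]

lemma prod_neg_div_one_sub (t : ZMod 3 → K) :
    ∏ i, -t (i - 1) / (1 - t (i + 1)) = -(t 0 * t 1 * t 2) / ((1 - t 0) * (1 - t 1) * (1 - t 2)) := by
  -- `ZMod 3` is `Fin 3` by definition, so `0 - 1` reduces to `2`
  rw [show ∏ i, -t (i - 1) / (1 - t (i + 1)) = _ from Fin.prod_univ_three _]
  change -t 2 / (1 - t 1) * (-t 0 / (1 - t 2)) * (-t 1 / (1 - t 0)) = _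
  rw [div_mul_div_comm, div_mul_div_comm]
  ring

lemma collinear_of_menelaus (hAt : ∀ i, A i = t i • B (i - 1) + (1 - t i) • B i)
    (hrel : t 0 * t 1 * t 2 + (1 - t 0) * (1 - t 1) * (1 - t 2) = 0) (ht : t 1 ≠ 1) :
    Collinear K {A 2, A 0, A 1} := by
  have hmenelaus : (1 - t 1) • (A 2 - A 0) = t 2 • (A 1 - A 0) := by
    have h : t 2 • (A 1 - A 0) - (1 - t 1) • (A 2 - A 0)
        = (t 0 * t 1 * t 2 + (1 - t 0) * (1 - t 1) * (1 - t 2)) • (B 0 - B 2) := by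
      have h₀ : A 0 = t 0 • B 2 + (1 - t 0) • B 0 := hAt 0
      have h₁ : A 1 = t 1 • B 0 + (1 - t 1) • B 1 := hAt 1
      have h₂ : A 2 = t 2 • B 1 + (1 - t 2) • B 2 := hAt 2
      rw [h₀, h₁, h₂]
      module
    rw [hrel, zero_smul, sub_eq_zero] at h
    exact h.symm
  apply collinear_insert_of_mem_affineSpan_pair
  have h1t : 1 - t 1 ≠ 0 := sub_ne_zero.mpr ht.symm
  convert AffineMap.lineMap_mem_affineSpan_pair (t 2 / (1 - t 1)) (A 0) (A 1)
  rw [AffineMap.lineMap_apply, vsub_eq_sub, vadd_eq_add, div_eq_inv_mul, mul_smul, ← hmenelaus,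
    smul_smul, inv_mul_cancel₀ h1t, one_smul, sub_add_cancel]

end Menelaus

theorem stmt10_general
    (A B v w : ZMod 3 → (Fin 3 → ℝ)) (t : ZMod 3 → ℝ)
    (a : ZMod 3 → (Fin 3 → ℝ)) (ha : ∀ i, a i = A (i + 1) - A i)
    (hnext : ∀ i, tripleProd (a i) (v i) (w i) ≠ 0)
    (hBs0 : ∀ i, B (i - 1) - A i ∈ Submodule.span ℝ ({v i, w i} : Set (Fin 3 → ℝ)))
    (hBs1 : ∀ i, B i - A i ∈ Submodule.span ℝ ({v i, w i} : Set (Fin 3 → ℝ)))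
    (ht1 : ∀ i, t i ≠ 1)
    (hAt : ∀ i, A i = t i • B (i - 1) + (1 - t i) • B i)
    -- the central triangle is nondegenerate
    (hA : ¬ Collinear ℝ ({A 1, A 2, A 3} : Set (Fin 3 → ℝ))) :
    ∏ i : ZMod 3, tripleProd (a (i - 1)) (v i) (w i) / tripleProd (a i) (v i) (w i) ≠ 1 := by
  intro hχ
  have hfactor : ∀ i, tripleProd (a (i - 1)) (v i) (w i) / tripleProd (a i) (v i) (w i)
      = -t (i - 1) / (1 - t (i + 1)) := fun i => by
    have hφ := map_sub_sub_one_div_map_add_one_sub_of_inscribed (tripleProdLeft (v i) (w i)) hAt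
      (span_pair_le_ker_tripleProdLeft _ _ (hBs0 i)) (span_pair_le_ker_tripleProdLeft _ _ (hBs1 i))
      (by simpa [ha] using hnext i)
    simpa [ha] using hφ
  have h1t : ∀ i, 1 - t i ≠ 0 := fun i => sub_ne_zero.mpr (ht1 i).symm
  rw [Finset.prod_congr rfl fun i _ => hfactor i, prod_neg_div_one_sub,
    div_eq_one_iff_eq (mul_ne_zero (mul_ne_zero (h1t 0) (h1t 1)) (h1t 2)),
    neg_eq_iff_add_eq_zero] at hχ
  apply hA
  rw [show (3 : ZMod 3) = 0 from rfl, Set.insert_comm, Set.pair_comm]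
  exact collinear_of_menelaus hAt (by linear_combination hχ) (ht1 1)

/-- **A Kokotsakis mesh with planar faces over a nondegenerate triangle is not
infinitesimally flexible:** for `n = 3`, if `A₁, A₂, A₃` are not collinear then
`χ(M) = ∏ᵢ (a_{i-1}, vᵢ, wᵢ)/(aᵢ, vᵢ, wᵢ) ≠ 1`. -/
theorem stmt10
    (A B v w : ZMod 3 → (Fin 3 → ℝ)) (t : ZMod 3 → ℝ)
    (a : ZMod 3 → (Fin 3 → ℝ)) (ha : ∀ i, a i = A (i + 1) - A i)
    -- all the points `Aᵢ`, `Bᵢ` lie in a common affine plane `π = {x | ⟨ν, x⟩ = d}`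
    (ν : Fin 3 → ℝ) (d : ℝ) (hν : ν ≠ 0)
    (hAπ : ∀ i, ν ⬝ᵥ A i = d) (hBπ : ∀ i, ν ⬝ᵥ B i = d)
    (hvw : ∀ i, LinearIndependent ℝ ![v i, w i])
    (hprev : ∀ i, tripleProd (a (i - 1)) (v i) (w i) ≠ 0)
    (hnext : ∀ i, tripleProd (a i) (v i) (w i) ≠ 0)
    (hBv0 : ∀ i, B (i - 1) - A i ≠ 0) (hBv1 : ∀ i, B i - A i ≠ 0)
    (hBs0 : ∀ i, B (i - 1) - A i ∈ Submodule.span ℝ ({v i, w i} : Set (Fin 3 → ℝ)))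
    (hBs1 : ∀ i, B i - A i ∈ Submodule.span ℝ ({v i, w i} : Set (Fin 3 → ℝ)))
    (hBB : ∀ i, B (i - 1) ≠ B i)
    (ht0 : ∀ i, t i ≠ 0) (ht1 : ∀ i, t i ≠ 1)
    (hAt : ∀ i, A i = t i • B (i - 1) + (1 - t i) • B i)
    -- the central triangle is nondegenerate
    (hA : ¬ Collinear ℝ ({A 1, A 2, A 3} : Set (Fin 3 → ℝ))) :
    ∏ i : ZMod 3, tripleProd (a (i - 1)) (v i) (w i) / tripleProd (a i) (v i) (w i) ≠ 1 :=
  stmt10_general A B v w t a ha hnext hBs0 hBs1 ht1 hAt hA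
end

section
/- Let A_1,…,A_n ∈ ℝ³ be fixed (a_i := A_{i+1} − A_i constant) and let v_i, w_i : ℝ → ℝ³ (i modulo n) be differentiable functions such that for every i the real-valued functions t ↦ ⟨v_i(t),v_i(t)⟩, ⟨w_i(t),w_i(t)⟩, ⟨v_i(t),w_i(t)⟩, ⟨a_{i−1},v_i(t)⟩, ⟨a_i,w_i(t)⟩ and ⟨w_i(t),v_{i+1}(t)⟩ are constant (an isometric motion of the belt with the central face fixed). Fix t₀ ∈ ℝ and assume that at t₀ the general position conditions hold: for every i, v_i(t₀) and w_i(t₀) are linearly independent, neither a_{i−1} nor a_i lies in span{v_i(t₀),w_i(t₀)}, and (a_i,w_i(t₀),v_{i+1}(t₀)) ≠ 0. Then there exists λ ∈ ℝ such that for all i: v_i′(t₀) = λ·Π_{i−1}·[a_{i−1},v_i(t₀)] and w_i′(t₀) = λ·Π_i·[a_i,w_i(t₀)]; that is, the velocity of the motion is a scalar multiple of the vector field ξ_n at the configuration. -/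
/-!
Differentiating the constant scalar products at `t₀`: `vᵢ'` is orthogonal to `a_{i-1}` and `vᵢ`,
hence equals `μᵢ [a_{i-1}, vᵢ]`, and likewise `wᵢ' = νᵢ [aᵢ, wᵢ]`. Constancy of `⟨vᵢ, wᵢ⟩` gives
`νᵢ (aᵢ, vᵢ, wᵢ) = μᵢ (a_{i-1}, vᵢ, wᵢ)`, i.e. `νᵢ = ρᵢ μᵢ`, and constancy of `⟨wᵢ, v_{i+1}⟩` gives
`μ_{i+1} (aᵢ, wᵢ, v_{i+1}) = νᵢ (aᵢ, wᵢ, v_{i+1})`, i.e. `μ_{i+1} = νᵢ`. So `μ_{i+1} = ρᵢ μᵢ`, and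
`λ = μ₁` works.
-/

open Matrix

open Finset

section TripleProduct

lemma cross_dotProduct_eq_tripleProd (a v w : Fin 3 → ℝ) :
    (a ⨯₃ v) ⬝ᵥ w = tripleProd a v w := by
  rw [tripleProd, dotProduct_comm, triple_product_permutation, triple_product_permutation]

lemma dotProduct_cross_eq_neg_tripleProd (v a w : Fin 3 → ℝ) :
    v ⬝ᵥ (a ⨯₃ w) = -tripleProd a v w := by
  rw [tripleProd, triple_product_permutation, ← cross_anticomm, dotProduct_neg]

lemma tripleProd_ne_zero_of_notMem_span {a v w : Fin 3 → ℝ} (hvw : LinearIndependent ℝ ![v, w])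
    (ha : a ∉ Submodule.span ℝ ({v, w} : Set (Fin 3 → ℝ))) : tripleProd a v w ≠ 0 := by
  have hli : LinearIndependent ℝ ![a, v, w] :=
    linearIndependent_finCons.mpr ⟨hvw, by rwa [range_cons_cons_empty]⟩
  rw [tripleProd, triple_product_eq_det, ← isUnit_iff_ne_zero]
  exact (isUnit_iff_isUnit_det _).mp (linearIndependent_rows_iff_isUnit.mp hli)

lemma linearIndependent_left_of_tripleProd_ne_zero {a v w : Fin 3 → ℝ}
    (h : tripleProd a v w ≠ 0) : LinearIndependent ℝ ![a, v] := by
  rw [← crossProduct_ne_zero_iff_linearIndependent]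
  intro hav
  rw [← cross_dotProduct_eq_tripleProd, hav, zero_dotProduct] at h
  exact h rfl

lemma linearIndependent_right_of_tripleProd_ne_zero {a v w : Fin 3 → ℝ}
    (h : tripleProd a v w ≠ 0) : LinearIndependent ℝ ![a, w] := by
  rw [← crossProduct_ne_zero_iff_linearIndependent]
  intro haw
  rw [← neg_neg (tripleProd a v w), ← dotProduct_cross_eq_neg_tripleProd, haw,
    dotProduct_zero, neg_zero] at h
  exact h rfl

lemma exists_eq_smul_cross_of_dotProduct_eq_zero {a v x : Fin 3 → ℝ}
    (hav : LinearIndependent ℝ ![a, v]) (hxa : a ⬝ᵥ x = 0) (hxv : v ⬝ᵥ x = 0) :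
    ∃ μ : ℝ, x = μ • a ⨯₃ v := by
  have hc : a ⨯₃ v ≠ 0 := crossProduct_ne_zero_iff_linearIndependent.mpr hav
  have hcx : a ⨯₃ v ⨯₃ x = 0 := by
    rw [cross_cross_eq_smul_sub_smul, hxa, hxv, zero_smul, zero_smul, sub_zero]
  by_contra! hx
  have hli : LinearIndependent ℝ ![a ⨯₃ v, x] :=
    (LinearIndependent.pair_iff' hc).mpr fun μ h => hx μ h.symm
  exact crossProduct_ne_zero_iff_linearIndependent.mpr hli hcx

lemma mul_tripleProd_eq_of_dotProduct_add_eq_zero {a b f g : Fin 3 → ℝ} {μ ν : ℝ}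
    (h : (μ • a ⨯₃ f) ⬝ᵥ g + f ⬝ᵥ (ν • b ⨯₃ g) = 0) :
    μ * tripleProd a f g = ν * tripleProd b f g := by
  rw [smul_dotProduct, dotProduct_smul, cross_dotProduct_eq_tripleProd,
    dotProduct_cross_eq_neg_tripleProd, smul_eq_mul, smul_eq_mul] at h
  linarith

end TripleProduct

section Derivative

variable {𝕜 ι : Type*} [NontriviallyNormedField 𝕜] [Fintype ι]

theorem HasDerivAt.dotProduct {f g : 𝕜 → ι → 𝕜} {f' g' : ι → 𝕜} {t : 𝕜}
    (hf : HasDerivAt f f' t) (hg : HasDerivAt g g' t) :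
    HasDerivAt (fun s => f s ⬝ᵥ g s) (f' ⬝ᵥ g t + f t ⬝ᵥ g') t := by
  have hi (i : ι) : HasDerivAt (fun s => f s i * g s i) (f' i * g t i + f t i * g' i) t :=
    (hasDerivAt_pi.mp hf i).mul (hasDerivAt_pi.mp hg i)
  have h := HasDerivAt.fun_sum fun i (_ : i ∈ univ) => hi i
  rw [sum_add_distrib] at h
  exact h

lemma deriv_dotProduct_add_eq_zero {f g : 𝕜 → ι → 𝕜} {t : 𝕜} (hf : DifferentiableAt 𝕜 f t)
    (hg : DifferentiableAt 𝕜 g t) (hc : ∀ s u, f s ⬝ᵥ g s = f u ⬝ᵥ g u) :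
    deriv f t ⬝ᵥ g t + f t ⬝ᵥ deriv g t = 0 := by
  have h := hf.hasDerivAt.dotProduct hg.hasDerivAt
  rw [show (fun s => f s ⬝ᵥ g s) = fun _ => f t ⬝ᵥ g t from funext (hc · t)] at h
  exact h.unique (hasDerivAt_const t _)

lemma exists_deriv_eq_smul_cross {c : Fin 3 → ℝ} {f : ℝ → Fin 3 → ℝ} {t : ℝ}
    (hf : DifferentiableAt ℝ f t) (hff : ∀ s u, f s ⬝ᵥ f s = f u ⬝ᵥ f u)
    (hcf : ∀ s u, c ⬝ᵥ f s = c ⬝ᵥ f u) (hli : LinearIndependent ℝ ![c, f t]) :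
    ∃ μ : ℝ, deriv f t = μ • c ⨯₃ f t := by
  refine exists_eq_smul_cross_of_dotProduct_eq_zero hli ?_ ?_
  · simpa using deriv_dotProduct_add_eq_zero (differentiableAt_const c) hf hcf
  · have h := deriv_dotProduct_add_eq_zero hf hf hff
    rw [dotProduct_comm (f t)] at h
    rw [dotProduct_comm]
    linarith

end Derivative

lemma eq_mul_prod_Icc_of_forall_add_one {R M : Type*} [AddMonoidWithOne R] [CommMonoid M]
    {μ ρ : R → M} (h : ∀ i, μ (i + 1) = μ i * ρ i) (k : ℕ) :
    μ ((k : R) + 1) = μ 1 * ∏ j ∈ Icc 1 k, ρ j := by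
  induction k with
  | zero => simp
  | succ k ih =>
    rw [prod_Icc_succ_top (by omega), ← mul_assoc, ← ih, Nat.cast_succ, h]

theorem stmt11_general (n : ℕ)
    (a : ZMod n → (Fin 3 → ℝ))
    (v w : ZMod n → ℝ → (Fin 3 → ℝ))
    (hv : ∀ i, Differentiable ℝ (v i)) (hw : ∀ i, Differentiable ℝ (w i))
    -- the motion is isometric: all relevant scalar products are constant in time
    (hvv : ∀ i, ∀ s u : ℝ, v i s ⬝ᵥ v i s = v i u ⬝ᵥ v i u)
    (hww : ∀ i, ∀ s u : ℝ, w i s ⬝ᵥ w i s = w i u ⬝ᵥ w i u)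
    (hvw : ∀ i, ∀ s u : ℝ, v i s ⬝ᵥ w i s = v i u ⬝ᵥ w i u)
    (hav : ∀ i, ∀ s u : ℝ, a (i - 1) ⬝ᵥ v i s = a (i - 1) ⬝ᵥ v i u)
    (haw : ∀ i, ∀ s u : ℝ, a i ⬝ᵥ w i s = a i ⬝ᵥ w i u)
    (hwv : ∀ i, ∀ s u : ℝ, w i s ⬝ᵥ v (i + 1) s = w i u ⬝ᵥ v (i + 1) u)
    (t₀ : ℝ)
    -- general position at time `t₀`
    (hli : ∀ i, LinearIndependent ℝ ![v i t₀, w i t₀])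
    (hprev : ∀ i, a (i - 1) ∉ Submodule.span ℝ ({v i t₀, w i t₀} : Set (Fin 3 → ℝ)))
    (hnext : ∀ i, a i ∉ Submodule.span ℝ ({v i t₀, w i t₀} : Set (Fin 3 → ℝ)))
    (hgen : ∀ i, tripleProd (a i) (w i t₀) (v (i + 1) t₀) ≠ 0)
    -- the partial products `Πᵢ = ∏_{j=1}^{i} ρⱼ`
    (Pi : ℕ → ℝ)
    (hPi : ∀ i : ℕ, Pi i = ∏ j ∈ Finset.Icc 1 i,
      tripleProd (a ((j : ZMod n) - 1)) (v (j : ZMod n) t₀) (w (j : ZMod n) t₀) /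
        tripleProd (a (j : ZMod n)) (v (j : ZMod n) t₀) (w (j : ZMod n) t₀)) :
    ∃ l : ℝ, ∀ i ∈ Finset.Icc 1 n,
      deriv (v (i : ZMod n)) t₀ =
        (l * Pi (i - 1)) • crossProduct (a ((i : ZMod n) - 1)) (v (i : ZMod n) t₀) ∧
      deriv (w (i : ZMod n)) t₀ =
        (l * Pi i) • crossProduct (a (i : ZMod n)) (w (i : ZMod n) t₀) := by
  have hprevT i := tripleProd_ne_zero_of_notMem_span (hli i) (hprev i)
  have hnextT i := tripleProd_ne_zero_of_notMem_span (hli i) (hnext i)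
  choose μ hμ using fun i => exists_deriv_eq_smul_cross (hv i t₀) (hvv i) (hav i)
    (linearIndependent_left_of_tripleProd_ne_zero (hprevT i))
  choose ν hν using fun i => exists_deriv_eq_smul_cross (hw i t₀) (hww i) (haw i)
    (linearIndependent_right_of_tripleProd_ne_zero (hnextT i))
  have hνμ i : ν i = μ (i + 1) := by
    have h := deriv_dotProduct_add_eq_zero (hw i t₀) (hv (i + 1) t₀) (hwv i)
    rw [hν, hμ, add_sub_cancel_right] at h
    exact mul_right_cancel₀ (hgen i) (mul_tripleProd_eq_of_dotProduct_add_eq_zero h)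
  have hstep i : μ (i + 1) = μ i *
      (tripleProd (a (i - 1)) (v i t₀) (w i t₀) / tripleProd (a i) (v i t₀) (w i t₀)) := by
    have h := deriv_dotProduct_add_eq_zero (hv i t₀) (hw i t₀) (hvw i)
    rw [hμ, hν, hνμ] at h
    rw [mul_div_assoc', eq_div_iff (hnextT i), mul_tripleProd_eq_of_dotProduct_add_eq_zero h]
  refine ⟨μ 1, fun i hi => ?_⟩
  obtain ⟨k, rfl⟩ : ∃ k, i = k + 1 := ⟨i - 1, by grind⟩
  refine ⟨?_, ?_⟩
  · rw [hμ, Nat.cast_succ, eq_mul_prod_Icc_of_forall_add_one hstep, hPi, Nat.add_sub_cancel]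
  · rw [hν, hνμ, eq_mul_prod_Icc_of_forall_add_one hstep, hPi]

/-- **The velocity of an isometric motion of the belt is proportional to the flexibility
vector field `ξₙ`.**  If `vᵢ, wᵢ : ℝ → ℝ³` give an isometric motion of the belt of a
Kokotsakis mesh (all mutual scalar products constant, central face fixed), and the
configuration at time `t₀` is in general position, then there is a `λ ∈ ℝ` with
`vᵢ'(t₀) = λ Π_{i-1} [a_{i-1}, vᵢ(t₀)]` and `wᵢ'(t₀) = λ Πᵢ [aᵢ, wᵢ(t₀)]` for all `i`. -/
theorem stmt11 (n : ℕ) [NeZero n] (hn : 3 ≤ n)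
    (A : ZMod n → (Fin 3 → ℝ))
    (a : ZMod n → (Fin 3 → ℝ)) (ha : ∀ i, a i = A (i + 1) - A i)
    (v w : ZMod n → ℝ → (Fin 3 → ℝ))
    (hv : ∀ i, Differentiable ℝ (v i)) (hw : ∀ i, Differentiable ℝ (w i))
    -- the motion is isometric: all relevant scalar products are constant in time
    (hvv : ∀ i, ∀ s u : ℝ, v i s ⬝ᵥ v i s = v i u ⬝ᵥ v i u)
    (hww : ∀ i, ∀ s u : ℝ, w i s ⬝ᵥ w i s = w i u ⬝ᵥ w i u)
    (hvw : ∀ i, ∀ s u : ℝ, v i s ⬝ᵥ w i s = v i u ⬝ᵥ w i u)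
    (hav : ∀ i, ∀ s u : ℝ, a (i - 1) ⬝ᵥ v i s = a (i - 1) ⬝ᵥ v i u)
    (haw : ∀ i, ∀ s u : ℝ, a i ⬝ᵥ w i s = a i ⬝ᵥ w i u)
    (hwv : ∀ i, ∀ s u : ℝ, w i s ⬝ᵥ v (i + 1) s = w i u ⬝ᵥ v (i + 1) u)
    (t₀ : ℝ)
    -- general position at time `t₀`
    (hli : ∀ i, LinearIndependent ℝ ![v i t₀, w i t₀])
    (hprev : ∀ i, a (i - 1) ∉ Submodule.span ℝ ({v i t₀, w i t₀} : Set (Fin 3 → ℝ)))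
    (hnext : ∀ i, a i ∉ Submodule.span ℝ ({v i t₀, w i t₀} : Set (Fin 3 → ℝ)))
    (hgen : ∀ i, tripleProd (a i) (w i t₀) (v (i + 1) t₀) ≠ 0)
    -- the partial products `Πᵢ = ∏_{j=1}^{i} ρⱼ`
    (Pi : ℕ → ℝ)
    (hPi : ∀ i : ℕ, Pi i = ∏ j ∈ Finset.Icc 1 i,
      tripleProd (a ((j : ZMod n) - 1)) (v (j : ZMod n) t₀) (w (j : ZMod n) t₀) /
        tripleProd (a (j : ZMod n)) (v (j : ZMod n) t₀) (w (j : ZMod n) t₀)) :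
    ∃ l : ℝ, ∀ i ∈ Finset.Icc 1 n,
      deriv (v (i : ZMod n)) t₀ =
        (l * Pi (i - 1)) • crossProduct (a ((i : ZMod n) - 1)) (v (i : ZMod n) t₀) ∧
      deriv (w (i : ZMod n)) t₀ =
        (l * Pi i) • crossProduct (a (i : ZMod n)) (w (i : ZMod n) t₀) :=
  stmt11_general n a v w hv hw hvv hww hvw hav haw hwv t₀ hli hprev hnext hgen Pi hPi
end

section
/- For all real numbers α, β, φ, ω, ω′, let v := (cos φ, sin φ·cos ω′, sin φ·sin ω′) ∈ ℝ³ and w := cos β·(cos α, sin α, 0) + sin β·(cos ω·(sin α, −cos α, 0) + sin ω·(0,0,1)) ∈ ℝ³. Then ⟨v,w⟩ = cos α·cos β·cos φ + sin α·sin β·cos φ·cos ω + sin α·cos β·sin φ·cos ω′ − cos α·sin β·sin φ·cos ω·cos ω′ + sin β·sin φ·sin ω·sin ω′. Consequently, at each vertex A_i of a (3×3)-mesh with planar faces, the face angles α_i, β_i, γ_i, φ_i and the dihedral angles ω_{i−1}, ω_i satisfy the relation (R_i): cos α_i cos β_i cos φ_i + sin α_i sin β_i cos φ_i cos ω_{i−1}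 + sin α_i cos β_i sin φ_i cos ω_i − cos α_i sin β_i sin φ_i cos ω_{i−1} cos ω_i + sin β_i sin φ_i sin ω_{i−1} sin ω_i = cos γ_i. -/
open Matrix Real

/-- **The vertex relation of a (3×3)-mesh.**  With
`v = (cos φ, sin φ cos ω', sin φ sin ω')` and
`w = cos β (cos α, sin α, 0) + sin β (cos ω (sin α, −cos α, 0) + sin ω (0,0,1))`,
the scalar product `⟨v, w⟩` is given by the stated trigonometric expression;
consequently at a vertex of a (3×3)-mesh, where `⟨v, w⟩ = cos γ`, the relation `(R)`
between the face angles `α, β, γ, φ` and the dihedral angles `ω, ω'` holds. -/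
theorem stmt13 (α β φ ω ω' : ℝ)
    (v w : Fin 3 → ℝ)
    (hv : v = ![cos φ, sin φ * cos ω', sin φ * sin ω'])
    (hw : w = cos β • ![cos α, sin α, 0] +
      sin β • (cos ω • ![sin α, -cos α, 0] + sin ω • ![0, 0, 1])) :
    v ⬝ᵥ w =
      cos α * cos β * cos φ + sin α * sin β * cos φ * cos ω +
        sin α * cos β * sin φ * cos ω' - cos α * sin β * sin φ * cos ω * cos ω' +
        sin β * sin φ * sin ω * sin ω' ∧
    ∀ γ : ℝ, v ⬝ᵥ w = cos γ →
      cos α * cos β * cos φ + sin α * sin β * cos φ * cos ω +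
        sin α * cos β * sin φ * cos ω' - cos α * sin β * sin φ * cos ω * cos ω' +
        sin β * sin φ * sin ω * sin ω' = cos γ := by
  have h : v ⬝ᵥ w =
      cos α * cos β * cos φ + sin α * sin β * cos φ * cos ω +
        sin α * cos β * sin φ * cos ω' - cos α * sin β * sin φ * cos ω * cos ω' +
        sin β * sin φ * sin ω * sin ω' := by
    subst hv hw
    simp [dotProduct, Fin.sum_univ_three]
    ring
  exact ⟨h, fun γ hγ => h ▸ hγ⟩
end

section
/- Let α, β, γ, φ, ω, ω′ be real numbers satisfying the relation (R): cos α cos β cos φ + sin α sin β cos φ cos ω + sin α cos β sin φ cos ω′ − cos α sin β sin φ cos ω cos ω′ + sin β sin φ sin ω sin ω′ = cos γ. Set t := cos ω and t′ := cos ω′, and define C_1 := (cos α cos β cos φ − cos γ)² − sin²β sin²φ; C_2 := 2(cos α cos β cos φ − cos γ) sin α sin β cos φ; C_3 := 2(cos α cos β cos φ − cos γ) sin α cos β sin φ; C_4 := sin²α sin²β cos²φ + sin²β sin²φ; C_5 := 2(cos β cos φ − 2cos²α cos β cos φ + cos α cos γ) sin β sin φ; C_6 := sin²α cos²β sin²φ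 + sin²β sin²φ; C_7 := −2 sin α cos α sin²β sin φ cos φ; C_8 := −2 sin α cos α sin β cos β sin²φ; C_9 := −sin²α sin²β sin²φ. Then C_1 + C_2·t + C_3·t′ + C_4·t² + C_5·t·t′ + C_6·t′² + C_7·t²·t′ + C_8·t·t′² + C_9·t²·t′² = 0. -/
open Real

/-- **The polynomial vertex relation.**  If the face angles `α, β, γ, φ` and the dihedral
angles `ω, ω'` satisfy the vertex relation `(R)`, then `t = cos ω` and `t' = cos ω'`
satisfy the biquadratic polynomial relation
`C₁ + C₂ t + C₃ t' + C₄ t² + C₅ t t' + C₆ t'² + C₇ t² t' + C₈ t t'² + C₉ t² t'² = 0`. -/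
theorem stmt14 (α β γ φ ω ω' : ℝ)
    (hR : cos α * cos β * cos φ + sin α * sin β * cos φ * cos ω +
        sin α * cos β * sin φ * cos ω' - cos α * sin β * sin φ * cos ω * cos ω' +
        sin β * sin φ * sin ω * sin ω' = cos γ)
    (t t' : ℝ) (ht : t = cos ω) (ht' : t' = cos ω')
    (C₁ C₂ C₃ C₄ C₅ C₆ C₇ C₈ C₉ : ℝ)
    (hC₁ : C₁ = (cos α * cos β * cos φ - cos γ) ^ 2 - sin β ^ 2 * sin φ ^ 2)
    (hC₂ : C₂ = 2 * (cos α * cos β * cos φ - cos γ) * (sin α * sin β * cos φ))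
    (hC₃ : C₃ = 2 * (cos α * cos β * cos φ - cos γ) * (sin α * cos β * sin φ))
    (hC₄ : C₄ = sin α ^ 2 * sin β ^ 2 * cos φ ^ 2 + sin β ^ 2 * sin φ ^ 2)
    (hC₅ : C₅ = 2 * (cos β * cos φ - 2 * cos α ^ 2 * cos β * cos φ + cos α * cos γ) *
      (sin β * sin φ))
    (hC₆ : C₆ = sin α ^ 2 * cos β ^ 2 * sin φ ^ 2 + sin β ^ 2 * sin φ ^ 2)
    (hC₇ : C₇ = -2 * sin α * cos α * sin β ^ 2 * sin φ * cos φ)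
    (hC₈ : C₈ = -2 * sin α * cos α * sin β * cos β * sin φ ^ 2)
    (hC₉ : C₉ = -(sin α ^ 2 * sin β ^ 2 * sin φ ^ 2)) :
    C₁ + C₂ * t + C₃ * t' + C₄ * t ^ 2 + C₅ * (t * t') + C₆ * t' ^ 2 +
      C₇ * (t ^ 2 * t') + C₈ * (t * t' ^ 2) + C₉ * (t ^ 2 * t' ^ 2) = 0 := by
  subst ht ht' hC₁ hC₂ hC₃ hC₄ hC₅ hC₆ hC₇ hC₈ hC₉
  have h1 := sin_sq_add_cos_sq ω
  have h2 := sin_sq_add_cos_sq ω'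
  have h3 := sin_sq_add_cos_sq α
  linear_combination
    (((cos α * cos β * cos φ + sin α * sin β * cos φ * cos ω +
        sin α * cos β * sin φ * cos ω' - cos α * sin β * sin φ * cos ω * cos ω') - cos γ)
      - sin β * sin φ * sin ω * sin ω') * hR
    + (sin β ^ 2 * sin φ ^ 2 * sin ω' ^ 2) * h1
    + (sin β ^ 2 * sin φ ^ 2 * (1 - cos ω ^ 2)) * h2
    - (2 * sin β * sin φ * cos β * cos φ * cos ω * cos ω'
        + sin β ^ 2 * sin φ ^ 2 * cos ω ^ 2 * cos ω' ^ 2) * h3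
end
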